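/- arXiv:2403.04996 — 3 statements merged into one kernel-verified Lean document; each statement's English description precedes it below -/
import Mathlib

section
/- Let 0 < α < 1, β > 0, and let L be a nonnegative integer. There exists a constant C > 0 (depending only on α, β, L, φ, c₁, c₂) such that for every integer k ≥ 1 and every τ ∈ ℝ with c₁ 2^{k(α−1)−1} ≤ |τ| ≤ c₂ 2^{k(α−1)+1}, the L-th derivative of μ̂_{α,β,k} satisfies |(d/dτ)^L μ̂_{α,β,k}(τ)| ≤ C · 2^{k(L+1−β)} · min{1, |τ|^{−1/2} 2^{−k/2}}, and in this range the right-hand side is comparable to 2^{k(L+1−β−α/2)}. -/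
open MeasureTheory Filter

open Set

/-- The dyadic piece `μ̂_{α,β,k}` of the Fourier cosine transform of the oscillating
multiplier: `μ̂_{α,β,k}(τ) = 2 ∫₀^∞ λ^{−β} e^{iλ^α} φ(λ/2^k) cos(τλ) dλ`. -/
noncomputable def muHatPiece (α β : ℝ) (φ : ℝ → ℝ) (k : ℕ) (τ : ℝ) : ℂ :=
  (2 : ℂ) * ∫ l in Set.Ioi (0:ℝ),
    ((l ^ (-β) * φ (l / 2 ^ k) * Real.cos (τ * l) : ℝ) : ℂ) *
      Complex.exp (Complex.I * ((l ^ α : ℝ) : ℂ))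


lemma normExpI (r : ℝ) : ‖Complex.exp (Complex.I * r)‖ = 1 := by
  rw [mul_comm]; exact Complex.norm_exp_ofReal_mul_I r

lemma vdc1 {g g₁ g₂ : ℝ → ℝ} {a b ρ : ℝ} (ha : 0 < a) (hab : a ≤ b)
    (hg : ∀ x ∈ Set.Ioi (0:ℝ), HasDerivAt g (g₁ x) x)
    (hg₁ : ∀ x ∈ Set.Ioi (0:ℝ), HasDerivAt g₁ (g₂ x) x)
    (hg₂c : ContinuousOn g₂ (Set.Ioi 0))
    (hρ : 0 < ρ) (hlow : ∀ x ∈ Set.Icc a b, ρ ≤ |g₁ x|)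
    (hneg : ∀ x ∈ Set.Icc a b, g₂ x ≤ 0) :
    ‖∫ x in a..b, Complex.exp (Complex.I * g x)‖ ≤ 4 / ρ := by
  have hsub : Set.Icc a b ⊆ Set.Ioi (0:ℝ) := fun x hx => lt_of_lt_of_le ha hx.1
  have huIcc : Set.uIcc a b = Set.Icc a b := Set.uIcc_of_le hab
  have hne : ∀ x ∈ Set.Icc a b, g₁ x ≠ 0 := by
    intro x hx h0
    have := hlow x hx; rw [h0, abs_zero] at this; linarith
  have hneC : ∀ x ∈ Set.Icc a b, (Complex.I * (g₁ x : ℂ)) ≠ 0 := fun x hx =>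
    mul_ne_zero Complex.I_ne_zero (Complex.ofReal_ne_zero.mpr (hne x hx))
  set u : ℝ → ℂ := fun y => (Complex.I * (g₁ y : ℂ))⁻¹ with hu_def
  set u' : ℝ → ℂ := fun y => -(Complex.I * (g₂ y : ℂ)) / (Complex.I * (g₁ y : ℂ)) ^ 2 with hu'_def
  set v : ℝ → ℂ := fun y => Complex.exp (Complex.I * g y) with hv_def
  set v' : ℝ → ℂ := fun y => Complex.exp (Complex.I * g y) * (Complex.I * (g₁ y : ℂ)) with hv'_def
  have hu : ∀ x ∈ Set.Icc a b, HasDerivAt u (u' x) x := by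
    intro x hx
    have h1 : HasDerivAt (fun y => Complex.I * (g₁ y : ℂ)) (Complex.I * (g₂ x : ℂ)) x := by
      simpa using ((hg₁ x (hsub hx)).ofReal_comp).const_mul Complex.I
    have h2 := (hasDerivAt_const x (1:ℂ)).div h1 (hneC x hx)
    simp only [zero_mul, one_mul, zero_sub, one_div] at h2
    have e : u = ((fun _ => (1:ℂ)) / fun y => Complex.I * (g₁ y : ℂ)) := by
      funext y; simp [hu_def]
    rw [e]; exact h2
  have hv : ∀ x ∈ Set.Icc a b, HasDerivAt v (v' x) x := by
    intro x hx
    have h1 : HasDerivAt (fun y => Complex.I * (g y : ℂ)) (Complex.I * (g₁ x : ℂ)) x := by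
      simpa using ((hg x (hsub hx)).ofReal_comp).const_mul Complex.I
    simpa [hv_def, hv'_def] using h1.cexp
  -- continuity
  have hg₁c : ContinuousOn g₁ (Set.Icc a b) := fun x hx =>
    ((hg₁ x (hsub hx)).continuousAt).continuousWithinAt
  have hgc : ContinuousOn g (Set.Icc a b) := fun x hx =>
    ((hg x (hsub hx)).continuousAt).continuousWithinAt
  have hg₂c' : ContinuousOn g₂ (Set.Icc a b) := hg₂c.mono hsub
  have hvC : ContinuousOn v (Set.Icc a b) :=
    Complex.continuous_exp.comp_continuousOn
      (continuousOn_const.mul (Complex.continuous_ofReal.comp_continuousOn hgc))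
  have hv'C : ContinuousOn v' (Set.Icc a b) :=
    hvC.mul (continuousOn_const.mul (Complex.continuous_ofReal.comp_continuousOn hg₁c))
  have hu'C : ContinuousOn u' (Set.Icc a b) := by
    apply ContinuousOn.div
    · exact (continuousOn_const.mul (Complex.continuous_ofReal.comp_continuousOn hg₂c')).neg
    · exact (continuousOn_const.mul (Complex.continuous_ofReal.comp_continuousOn hg₁c)).pow 2
    · intro x hx
      exact pow_ne_zero 2 (hneC x hx)
  have hu'I : IntervalIntegrable u' volume a b := (hu'C.mono (le_of_eq huIcc)).intervalIntegrable
  have hv'I : IntervalIntegrable v' volume a b := (hv'C.mono (le_of_eq huIcc)).intervalIntegrable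
  have ibp := intervalIntegral.integral_mul_deriv_eq_deriv_mul
    (fun x hx => hu x (huIcc ▸ hx)) (fun x hx => hv x (huIcc ▸ hx)) hu'I hv'I
  have hcongr : ∫ x in a..b, u x * v' x = ∫ x in a..b, Complex.exp (Complex.I * g x) := by
    apply intervalIntegral.integral_congr
    intro x hx
    rw [huIcc] at hx
    simp only [hu_def, hv'_def]
    rw [inv_mul_eq_div]
    exact mul_div_cancel_right₀ _ (hneC x hx)
  rw [hcongr] at ibp
  rw [ibp]
  -- bounds
  have hnorm_u : ∀ x ∈ Set.Icc a b, ‖u x‖ ≤ 1 / ρ := by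
    intro x hx
    simp only [hu_def, norm_inv, norm_mul, Complex.norm_I, one_mul, Complex.norm_real,
      Real.norm_eq_abs]
    rw [one_div]
    exact inv_anti₀ hρ (hlow x hx)
  have hnorm_v : ∀ x : ℝ, ‖v x‖ = 1 := fun x => normExpI (g x)
  -- the integral of ‖u'‖
  have hu'norm : ∀ x ∈ Set.Icc a b, ‖u' x * v x‖ = -g₂ x / (g₁ x) ^ 2 := by
    intro x hx
    rw [norm_mul, hnorm_v, mul_one]
    simp only [hu'_def, norm_div, norm_neg, norm_mul, Complex.norm_I, one_mul,
      Complex.norm_real, Real.norm_eq_abs, norm_pow]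
    rw [abs_of_nonpos (hneg x hx), sq_abs]
  have hftc : ∫ x in a..b, (-g₂ x / (g₁ x) ^ 2) = (g₁ b)⁻¹ - (g₁ a)⁻¹ := by
    apply intervalIntegral.integral_eq_sub_of_hasDerivAt
    · intro x hx
      rw [huIcc] at hx
      exact (hg₁ x (hsub hx)).inv (hne x hx)
    · apply ContinuousOn.intervalIntegrable
      rw [huIcc]
      exact (hg₂c'.neg).div ((hg₁c).pow 2) (fun x hx => pow_ne_zero 2 (hne x hx))
  have hIuv : ‖∫ x in a..b, u' x * v x‖ ≤ 2 / ρ := by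
    have h1 : ‖∫ x in a..b, u' x * v x‖ ≤ |∫ x in a..b, (-g₂ x / (g₁ x) ^ 2)| := by
      apply intervalIntegral.norm_integral_le_abs_of_norm_le
      · apply ae_restrict_of_forall_mem measurableSet_uIoc
        intro x hx
        have hx' : x ∈ Set.Icc a b := by
          rw [Set.uIoc_of_le hab] at hx; exact Set.Ioc_subset_Icc_self hx
        rw [hu'norm x hx']
      · apply ContinuousOn.intervalIntegrable
        rw [huIcc]
        exact (hg₂c'.neg).div ((hg₁c).pow 2) (fun x hx => pow_ne_zero 2 (hne x hx))
    rw [hftc] at h1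
    refine h1.trans ?_
    have hba : |(g₁ b)⁻¹ - (g₁ a)⁻¹| ≤ |(g₁ b)⁻¹| + |(g₁ a)⁻¹| := abs_sub _ _
    have h2 : |(g₁ b)⁻¹| ≤ 1 / ρ := by
      rw [abs_inv, one_div]
      exact inv_anti₀ hρ (hlow b ⟨hab, le_refl b⟩)
    have h3 : |(g₁ a)⁻¹| ≤ 1 / ρ := by
      rw [abs_inv, one_div]
      exact inv_anti₀ hρ (hlow a ⟨le_refl a, hab⟩)
    calc |(g₁ b)⁻¹ - (g₁ a)⁻¹| ≤ |(g₁ b)⁻¹| + |(g₁ a)⁻¹| := hba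
    _ ≤ 1 / ρ + 1 / ρ := add_le_add h2 h3
    _ = 2 / ρ := by ring
  calc ‖u b * v b - u a * v a - ∫ x in a..b, u' x * v x‖
      ≤ ‖u b * v b - u a * v a‖ + ‖∫ x in a..b, u' x * v x‖ := norm_sub_le _ _
    _ ≤ (‖u b * v b‖ + ‖u a * v a‖) + 2 / ρ := add_le_add (norm_sub_le _ _) hIuv
    _ ≤ (1 / ρ * 1 + 1 / ρ * 1) + 2 / ρ := by
        refine add_le_add (add_le_add ?_ ?_) le_rfl
        · rw [norm_mul, hnorm_v]
          exact mul_le_mul_of_nonneg_right (hnorm_u b ⟨hab, le_refl b⟩) zero_le_one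
        · rw [norm_mul, hnorm_v]
          exact mul_le_mul_of_nonneg_right (hnorm_u a ⟨le_refl a, hab⟩) zero_le_one
    _ = 4 / ρ := by ring

lemma expIg_contOn {g g₁ : ℝ → ℝ} (hg : ∀ x ∈ Set.Ioi (0:ℝ), HasDerivAt g (g₁ x) x)
    {s : Set ℝ} (hs : s ⊆ Set.Ioi (0:ℝ)) :
    ContinuousOn (fun x => Complex.exp (Complex.I * g x)) s :=
  Complex.continuous_exp.comp_continuousOn
    (continuousOn_const.mul (Complex.continuous_ofReal.comp_continuousOn
      (fun x hx => ((hg x (hs hx)).continuousAt).continuousWithinAt)))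

lemma vdc2_right {g g₁ g₂ : ℝ → ℝ} {a b δ : ℝ} (ha : 0 < a) (hab : a ≤ b)
    (hg : ∀ x ∈ Set.Ioi (0:ℝ), HasDerivAt g (g₁ x) x)
    (hg₁ : ∀ x ∈ Set.Ioi (0:ℝ), HasDerivAt g₁ (g₂ x) x)
    (hg₂c : ContinuousOn g₂ (Set.Ioi 0))
    (hδ : 0 < δ) (hgg : ∀ x ∈ Set.Icc a b, g₂ x ≤ -δ)
    (hb0 : 0 ≤ g₁ b) :
    ‖∫ x in a..b, Complex.exp (Complex.I * g x)‖ ≤ 5 / Real.sqrt δ := by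
  have hsub : Set.Icc a b ⊆ Set.Ioi (0:ℝ) := fun x hx => lt_of_lt_of_le ha hx.1
  set ρ := Real.sqrt δ with hρ_def
  have hρ : 0 < ρ := Real.sqrt_pos.mpr hδ
  have hρδ : ρ * ρ = δ := Real.mul_self_sqrt hδ.le
  have hρδ' : ρ / δ = 1 / ρ := by rw [← hρδ]; field_simp
  have key : ∀ x ∈ Set.Icc a b, δ * (b - x) ≤ g₁ x := by
    intro x hx
    rcases eq_or_lt_of_le hx.2 with h | h
    · rw [h]; simpa using hb0
    · have hcont : ContinuousOn g₁ (Set.Icc x b) := fun y hy =>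
        ((hg₁ y (hsub ⟨le_trans hx.1 hy.1, hy.2⟩)).continuousAt).continuousWithinAt
      have hderiv : ∀ y ∈ Set.Ioo x b, HasDerivAt g₁ (g₂ y) y := fun y hy =>
        hg₁ y (hsub ⟨le_trans hx.1 hy.1.le, hy.2.le⟩)
      obtain ⟨c, hc, hceq⟩ := exists_hasDerivAt_eq_slope g₁ g₂ h hcont hderiv
      have hc' : g₂ c ≤ -δ := hgg c ⟨le_trans hx.1 hc.1.le, hc.2.le⟩
      have hslope : g₁ b - g₁ x = g₂ c * (b - x) := by
        rw [hceq, div_mul_cancel₀ _ (by linarith : b - x ≠ 0)]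
      nlinarith [hx.2]
  by_cases hsmall : b - a ≤ ρ / δ
  · have h1 : ‖∫ x in a..b, Complex.exp (Complex.I * g x)‖ ≤ 1 * |b - a| :=
      intervalIntegral.norm_integral_le_of_norm_le_const (fun x _ => le_of_eq (normExpI (g x)))
    rw [one_mul, abs_of_nonneg (by linarith : (0:ℝ) ≤ b - a)] at h1
    refine h1.trans (hsmall.trans ?_)
    rw [hρδ']
    gcongr
    norm_num
  · push_neg at hsmall
    set c := b - ρ / δ with hc_def
    have hρδpos : 0 < ρ / δ := div_pos hρ hδ
    have hac : a ≤ c := by simp only [hc_def]; linarith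
    have hcb : c ≤ b := by simp only [hc_def]; linarith
    have hi1 : IntervalIntegrable (fun x => Complex.exp (Complex.I * g x)) volume a c :=
      ((expIg_contOn hg (fun x hx => hsub ⟨hx.1, le_trans hx.2 hcb⟩)).mono
        (le_of_eq (Set.uIcc_of_le hac))).intervalIntegrable
    have hi2 : IntervalIntegrable (fun x => Complex.exp (Complex.I * g x)) volume c b :=
      ((expIg_contOn hg (fun x hx => hsub ⟨le_trans hac hx.1, hx.2⟩)).mono
        (le_of_eq (Set.uIcc_of_le hcb))).intervalIntegrable
    rw [← intervalIntegral.integral_add_adjacent_intervals hi1 hi2]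
    have hbd1 : ‖∫ x in a..c, Complex.exp (Complex.I * g x)‖ ≤ 4 / ρ := by
      apply vdc1 ha hac hg hg₁ hg₂c hρ
      · intro x hx
        have hxab : x ∈ Set.Icc a b := ⟨hx.1, le_trans hx.2 hcb⟩
        have h2 : δ * (b - x) ≤ g₁ x := key x hxab
        have h3 : ρ ≤ δ * (b - x) := by
          have : ρ / δ ≤ b - x := by simp only [hc_def] at hx; linarith [hx.2]
          calc ρ = δ * (ρ / δ) := by field_simp
          _ ≤ δ * (b - x) := by apply mul_le_mul_of_nonneg_left this hδ.le
        exact le_trans (le_trans h3 h2) (le_abs_self _)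
      · intro x hx
        exact le_trans (hgg x ⟨hx.1, le_trans hx.2 hcb⟩) (by linarith)
    have hbd2 : ‖∫ x in c..b, Complex.exp (Complex.I * g x)‖ ≤ 1 / ρ := by
      have h1 : ‖∫ x in c..b, Complex.exp (Complex.I * g x)‖ ≤ 1 * |b - c| :=
        intervalIntegral.norm_integral_le_of_norm_le_const (fun x _ => le_of_eq (normExpI (g x)))
      rw [one_mul, abs_of_nonneg (by linarith : (0:ℝ) ≤ b - c)] at h1
      refine h1.trans ?_
      rw [← hρδ']
      simp only [hc_def]; linarith
    calc ‖(∫ x in a..c, Complex.exp (Complex.I * g x)) +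
          ∫ x in c..b, Complex.exp (Complex.I * g x)‖
        ≤ ‖∫ x in a..c, Complex.exp (Complex.I * g x)‖ +
          ‖∫ x in c..b, Complex.exp (Complex.I * g x)‖ := norm_add_le _ _
      _ ≤ 4 / ρ + 1 / ρ := add_le_add hbd1 hbd2
      _ = 5 / ρ := by ring

lemma vdc2_left {g g₁ g₂ : ℝ → ℝ} {a b δ : ℝ} (ha : 0 < a) (hab : a ≤ b)
    (hg : ∀ x ∈ Set.Ioi (0:ℝ), HasDerivAt g (g₁ x) x)
    (hg₁ : ∀ x ∈ Set.Ioi (0:ℝ), HasDerivAt g₁ (g₂ x) x)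
    (hg₂c : ContinuousOn g₂ (Set.Ioi 0))
    (hδ : 0 < δ) (hgg : ∀ x ∈ Set.Icc a b, g₂ x ≤ -δ)
    (ha0 : g₁ a ≤ 0) :
    ‖∫ x in a..b, Complex.exp (Complex.I * g x)‖ ≤ 5 / Real.sqrt δ := by
  have hsub : Set.Icc a b ⊆ Set.Ioi (0:ℝ) := fun x hx => lt_of_lt_of_le ha hx.1
  set ρ := Real.sqrt δ with hρ_def
  have hρ : 0 < ρ := Real.sqrt_pos.mpr hδ
  have hρδ : ρ * ρ = δ := Real.mul_self_sqrt hδ.le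
  have hρδ' : ρ / δ = 1 / ρ := by rw [← hρδ]; field_simp
  have key : ∀ x ∈ Set.Icc a b, g₁ x ≤ -(δ * (x - a)) := by
    intro x hx
    rcases eq_or_lt_of_le hx.1 with h | h
    · rw [← h]; simpa using ha0
    · have hcont : ContinuousOn g₁ (Set.Icc a x) := fun y hy =>
        ((hg₁ y (hsub ⟨hy.1, le_trans hy.2 hx.2⟩)).continuousAt).continuousWithinAt
      have hderiv : ∀ y ∈ Set.Ioo a x, HasDerivAt g₁ (g₂ y) y := fun y hy =>
        hg₁ y (hsub ⟨hy.1.le, le_trans hy.2.le hx.2⟩)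
      obtain ⟨c, hc, hceq⟩ := exists_hasDerivAt_eq_slope g₁ g₂ h hcont hderiv
      have hc' : g₂ c ≤ -δ := hgg c ⟨hc.1.le, le_trans hc.2.le hx.2⟩
      have hslope : g₁ x - g₁ a = g₂ c * (x - a) := by
        rw [hceq, div_mul_cancel₀ _ (by linarith : x - a ≠ 0)]
      nlinarith [hx.1]
  by_cases hsmall : b - a ≤ ρ / δ
  · have h1 : ‖∫ x in a..b, Complex.exp (Complex.I * g x)‖ ≤ 1 * |b - a| :=
      intervalIntegral.norm_integral_le_of_norm_le_const (fun x _ => le_of_eq (normExpI (g x)))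
    rw [one_mul, abs_of_nonneg (by linarith : (0:ℝ) ≤ b - a)] at h1
    refine h1.trans (hsmall.trans ?_)
    rw [hρδ']
    gcongr
    norm_num
  · push_neg at hsmall
    set c := a + ρ / δ with hc_def
    have hρδpos : 0 < ρ / δ := div_pos hρ hδ
    have hac : a ≤ c := by simp only [hc_def]; linarith
    have hcb : c ≤ b := by simp only [hc_def]; linarith
    have hi1 : IntervalIntegrable (fun x => Complex.exp (Complex.I * g x)) volume a c :=
      ((expIg_contOn hg (fun x hx => hsub ⟨hx.1, le_trans hx.2 hcb⟩)).mono
        (le_of_eq (Set.uIcc_of_le hac))).intervalIntegrable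
    have hi2 : IntervalIntegrable (fun x => Complex.exp (Complex.I * g x)) volume c b :=
      ((expIg_contOn hg (fun x hx => hsub ⟨le_trans hac hx.1, hx.2⟩)).mono
        (le_of_eq (Set.uIcc_of_le hcb))).intervalIntegrable
    rw [← intervalIntegral.integral_add_adjacent_intervals hi1 hi2]
    have hbd1 : ‖∫ x in a..c, Complex.exp (Complex.I * g x)‖ ≤ 1 / ρ := by
      have h1 : ‖∫ x in a..c, Complex.exp (Complex.I * g x)‖ ≤ 1 * |c - a| :=
        intervalIntegral.norm_integral_le_of_norm_le_const (fun x _ => le_of_eq (normExpI (g x)))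
      rw [one_mul, abs_of_nonneg (by linarith : (0:ℝ) ≤ c - a)] at h1
      refine h1.trans ?_
      rw [← hρδ']
      simp only [hc_def]; linarith
    have hbd2 : ‖∫ x in c..b, Complex.exp (Complex.I * g x)‖ ≤ 4 / ρ := by
      apply vdc1 (lt_of_lt_of_le ha hac) hcb hg hg₁ hg₂c hρ
      · intro x hx
        have hxab : x ∈ Set.Icc a b := ⟨le_trans hac hx.1, hx.2⟩
        have h2 : g₁ x ≤ -(δ * (x - a)) := key x hxab
        have h3 : δ * (x - a) ≥ ρ := by
          have hxc : ρ / δ ≤ x - a := by simp only [hc_def] at hx; linarith [hx.1]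
          calc ρ = δ * (ρ / δ) := by field_simp
          _ ≤ δ * (x - a) := mul_le_mul_of_nonneg_left hxc hδ.le
        have : ρ ≤ -g₁ x := by linarith
        exact le_trans this (neg_le_abs _)
      · intro x hx
        exact le_trans (hgg x ⟨le_trans hac hx.1, hx.2⟩) (by linarith)
    calc ‖(∫ x in a..c, Complex.exp (Complex.I * g x)) +
          ∫ x in c..b, Complex.exp (Complex.I * g x)‖
        ≤ ‖∫ x in a..c, Complex.exp (Complex.I * g x)‖ +
          ‖∫ x in c..b, Complex.exp (Complex.I * g x)‖ := norm_add_le _ _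
      _ ≤ 1 / ρ + 4 / ρ := add_le_add hbd1 hbd2
      _ = 5 / ρ := by ring

lemma vdc2 {g g₁ g₂ : ℝ → ℝ} {a b δ : ℝ} (ha : 0 < a) (hab : a ≤ b)
    (hg : ∀ x ∈ Set.Ioi (0:ℝ), HasDerivAt g (g₁ x) x)
    (hg₁ : ∀ x ∈ Set.Ioi (0:ℝ), HasDerivAt g₁ (g₂ x) x)
    (hg₂c : ContinuousOn g₂ (Set.Ioi 0))
    (hδ : 0 < δ) (hgg : ∀ x ∈ Set.Icc a b, g₂ x ≤ -δ) :
    ‖∫ x in a..b, Complex.exp (Complex.I * g x)‖ ≤ 10 / Real.sqrt δ := by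
  have hsub : Set.Icc a b ⊆ Set.Ioi (0:ℝ) := fun x hx => lt_of_lt_of_le ha hx.1
  have hρ : 0 < Real.sqrt δ := Real.sqrt_pos.mpr hδ
  have h510 : (5:ℝ) / Real.sqrt δ ≤ 10 / Real.sqrt δ := by gcongr; norm_num
  by_cases hb0 : 0 ≤ g₁ b
  · exact (vdc2_right ha hab hg hg₁ hg₂c hδ hgg hb0).trans h510
  by_cases ha0 : g₁ a ≤ 0
  · exact (vdc2_left ha hab hg hg₁ hg₂c hδ hgg ha0).trans h510
  push_neg at hb0 ha0
  have hg₁c : ContinuousOn g₁ (Set.Icc a b) := fun y hy =>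
    ((hg₁ y (hsub hy)).continuousAt).continuousWithinAt
  have hIVT := intermediate_value_Icc' hab hg₁c
  have h0mem : (0:ℝ) ∈ Set.Icc (g₁ b) (g₁ a) := ⟨hb0.le, ha0.le⟩
  obtain ⟨z, hz, hz0⟩ := hIVT h0mem
  have hi1 : IntervalIntegrable (fun x => Complex.exp (Complex.I * g x)) volume a z :=
    ((expIg_contOn hg (fun x hx => hsub ⟨hx.1, le_trans hx.2 hz.2⟩)).mono
      (le_of_eq (Set.uIcc_of_le hz.1))).intervalIntegrable
  have hi2 : IntervalIntegrable (fun x => Complex.exp (Complex.I * g x)) volume z b :=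
    ((expIg_contOn hg (fun x hx => hsub ⟨le_trans hz.1 hx.1, hx.2⟩)).mono
      (le_of_eq (Set.uIcc_of_le hz.2))).intervalIntegrable
  rw [← intervalIntegral.integral_add_adjacent_intervals hi1 hi2]
  have hbd1 : ‖∫ x in a..z, Complex.exp (Complex.I * g x)‖ ≤ 5 / Real.sqrt δ :=
    vdc2_right ha hz.1 hg hg₁ hg₂c hδ
      (fun x hx => hgg x ⟨hx.1, le_trans hx.2 hz.2⟩) (le_of_eq hz0.symm)
  have hbd2 : ‖∫ x in z..b, Complex.exp (Complex.I * g x)‖ ≤ 5 / Real.sqrt δ :=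
    vdc2_left (lt_of_lt_of_le ha hz.1) hz.2 hg hg₁ hg₂c hδ
      (fun x hx => hgg x ⟨le_trans hz.1 hx.1, hx.2⟩) (le_of_eq hz0)
  calc ‖(∫ x in a..z, Complex.exp (Complex.I * g x)) +
        ∫ x in z..b, Complex.exp (Complex.I * g x)‖
      ≤ ‖∫ x in a..z, Complex.exp (Complex.I * g x)‖ +
        ‖∫ x in z..b, Complex.exp (Complex.I * g x)‖ := norm_add_le _ _
    _ ≤ 5 / Real.sqrt δ + 5 / Real.sqrt δ := add_le_add hbd1 hbd2
    _ = 10 / Real.sqrt δ := by ring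

lemma vdc2_amp {g g₁ g₂ : ℝ → ℝ} {A A' : ℝ → ℂ} {a b δ : ℝ} (ha : 0 < a) (hab : a ≤ b)
    (hg : ∀ x ∈ Set.Ioi (0:ℝ), HasDerivAt g (g₁ x) x)
    (hg₁ : ∀ x ∈ Set.Ioi (0:ℝ), HasDerivAt g₁ (g₂ x) x)
    (hg₂c : ContinuousOn g₂ (Set.Ioi 0))
    (hA : ∀ x ∈ Set.Ioi (0:ℝ), HasDerivAt A (A' x) x)
    (hA'c : ContinuousOn A' (Set.Ioi 0))
    (hδ : 0 < δ) (hgg : ∀ x ∈ Set.Icc a b, g₂ x ≤ -δ) :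
    ‖∫ x in a..b, A x * Complex.exp (Complex.I * g x)‖ ≤
      10 / Real.sqrt δ * (‖A b‖ + ∫ x in a..b, ‖A' x‖) := by
  have hsub : Set.Icc a b ⊆ Set.Ioi (0:ℝ) := fun x hx => lt_of_lt_of_le ha hx.1
  have huIcc : Set.uIcc a b = Set.Icc a b := Set.uIcc_of_le hab
  have hρ : 0 < Real.sqrt δ := Real.sqrt_pos.mpr hδ
  set f : ℝ → ℂ := fun x => Complex.exp (Complex.I * g x) with hf_def
  set F : ℝ → ℂ := fun y => ∫ x in a..y, f x with hF_def
  have hfc : ContinuousOn f (Set.Ioi 0) := expIg_contOn hg subset_rfl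
  have hF : ∀ x ∈ Set.Icc a b, HasDerivAt F (f x) x := by
    intro x hx
    apply intervalIntegral.integral_hasDerivAt_right
    · exact ((hfc.mono (fun y hy => hsub ⟨hy.1, le_trans hy.2 hx.2⟩)).mono
        (le_of_eq (Set.uIcc_of_le hx.1))).intervalIntegrable
    · exact ContinuousOn.stronglyMeasurableAtFilter isOpen_Ioi hfc x (hsub hx)
    · exact hfc.continuousAt (isOpen_Ioi.mem_nhds (hsub hx))
  have hFb : ∀ x ∈ Set.Icc a b, ‖F x‖ ≤ 10 / Real.sqrt δ := fun x hx =>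
    vdc2 ha hx.1 hg hg₁ hg₂c hδ (fun y hy => hgg y ⟨hy.1, le_trans hy.2 hx.2⟩)
  have hA'I : IntervalIntegrable A' volume a b :=
    ((hA'c.mono hsub).mono (le_of_eq huIcc)).intervalIntegrable
  have hfI : IntervalIntegrable f volume a b :=
    ((hfc.mono hsub).mono (le_of_eq huIcc)).intervalIntegrable
  have ibp := intervalIntegral.integral_mul_deriv_eq_deriv_mul
    (u := A) (v := F) (u' := A') (v' := f)
    (fun x hx => hA x (hsub (huIcc ▸ hx))) (fun x hx => hF x (huIcc ▸ hx)) hA'I hfI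
  have hFa : F a = 0 := intervalIntegral.integral_same
  rw [ibp, hFa, mul_zero, sub_zero]
  have hInorm : (0:ℝ) ≤ ∫ x in a..b, ‖A' x‖ :=
    intervalIntegral.integral_nonneg hab (fun x _ => norm_nonneg _)
  have h2 : ‖∫ x in a..b, A' x * F x‖ ≤ (∫ x in a..b, ‖A' x‖) * (10 / Real.sqrt δ) := by
    have h3 : ‖∫ x in a..b, A' x * F x‖ ≤ |∫ x in a..b, ‖A' x‖ * (10 / Real.sqrt δ)| := by
      apply intervalIntegral.norm_integral_le_abs_of_norm_le
      · apply ae_restrict_of_forall_mem measurableSet_uIoc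
        intro x hx
        have hx' : x ∈ Set.Icc a b := by
          rw [Set.uIoc_of_le hab] at hx; exact Set.Ioc_subset_Icc_self hx
        rw [norm_mul]
        exact mul_le_mul_of_nonneg_left (hFb x hx') (norm_nonneg _)
      · apply ContinuousOn.intervalIntegrable
        exact (((hA'c.mono hsub).mono (le_of_eq huIcc)).norm.mul continuousOn_const)
    rw [intervalIntegral.integral_mul_const] at h3
    rwa [abs_of_nonneg (mul_nonneg hInorm (by positivity))] at h3
  calc ‖A b * F b - ∫ x in a..b, A' x * F x‖
      ≤ ‖A b * F b‖ + ‖∫ x in a..b, A' x * F x‖ := norm_sub_le _ _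
    _ ≤ ‖A b‖ * (10 / Real.sqrt δ) + (∫ x in a..b, ‖A' x‖) * (10 / Real.sqrt δ) := by
        refine add_le_add ?_ h2
        rw [norm_mul]
        exact mul_le_mul_of_nonneg_left (hFb b ⟨hab, le_refl b⟩) (norm_nonneg _)
    _ = 10 / Real.sqrt δ * (‖A b‖ + ∫ x in a..b, ‖A' x‖) := by ring

lemma iteratedDeriv_chain {f : ℕ → ℝ → ℂ} (h : ∀ n τ, HasDerivAt (f n) (f (n + 1) τ) τ) :
    ∀ (L : ℕ) (τ : ℝ), iteratedDeriv L (f 0) τ = f L τ := by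
  intro L
  induction L generalizing f with
  | zero => intro τ; simp
  | succ n ih =>
    intro τ
    rw [iteratedDeriv_succ']
    have hd : deriv (f 0) = f 1 := funext fun t => (h 0 t).deriv
    rw [hd]
    exact ih (f := fun m => f (m + 1)) (fun m t => h (m + 1) t) τ

noncomputable def Jfun (α β : ℝ) (φ : ℝ → ℝ) (P s : ℝ) (n : ℕ) (τ : ℝ) : ℂ :=
  ∫ x in (P / 4)..(4 * P), (Complex.I * s * x) ^ n * ((x ^ (-β) * φ (x / P) : ℝ) : ℂ) *
    Complex.exp (Complex.I * ((x ^ α + s * τ * x : ℝ) : ℂ))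

section JfunFacts

variable {α β : ℝ} {φ : ℝ → ℝ} {P s : ℝ}

lemma psi_contOn (hφ : Continuous φ) :
    ContinuousOn (fun x : ℝ => ((x ^ (-β) * φ (x / P) : ℝ) : ℂ)) (Set.Ioi 0) := by
  apply Complex.continuous_ofReal.comp_continuousOn
  apply ContinuousOn.mul
  · exact fun x hx =>
      (Real.continuousAt_rpow_const x (-β) (Or.inl (ne_of_gt hx))).continuousWithinAt
  · exact (hφ.comp (continuous_id.div_const P)).continuousOn

lemma ampn_cont (n : ℕ) : Continuous (fun x : ℝ => (Complex.I * s * x) ^ n) :=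
  (continuous_const.mul Complex.continuous_ofReal).pow n

lemma expphase_contOn (τ : ℝ) :
    ContinuousOn (fun x : ℝ => Complex.exp (Complex.I * ((x ^ α + s * τ * x : ℝ) : ℂ)))
      (Set.Ioi 0) := by
  apply Complex.continuous_exp.comp_continuousOn
  apply ContinuousOn.mul continuousOn_const
  apply Complex.continuous_ofReal.comp_continuousOn
  apply ContinuousOn.add
  · exact fun x hx =>
      (Real.continuousAt_rpow_const x α (Or.inl (ne_of_gt hx))).continuousWithinAt
  · exact (continuous_const.mul continuous_id).continuousOn

lemma Jint_contOn (hφ : Continuous φ) (n : ℕ) (τ : ℝ) :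
    ContinuousOn (fun x : ℝ => (Complex.I * s * x) ^ n * ((x ^ (-β) * φ (x / P) : ℝ) : ℂ) *
      Complex.exp (Complex.I * ((x ^ α + s * τ * x : ℝ) : ℂ))) (Set.Ioi 0) :=
  (((ampn_cont n).continuousOn.mul (psi_contOn hφ)).mul (expphase_contOn τ))

lemma hasDerivAt_Jfun (hφ : Continuous φ) (hP : 0 < P) (n : ℕ) (τ : ℝ) :
    HasDerivAt (Jfun α β φ P s n) (Jfun α β φ P s (n + 1) τ) τ := by
  have hab : P / 4 ≤ 4 * P := by linarith
  have hsubIoc : Set.uIoc (P / 4) (4 * P) ⊆ Set.Ioi (0 : ℝ) := by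
    rw [Set.uIoc_of_le hab]; intro x hx; exact lt_trans (by positivity) hx.1
  have hsubIcc : Set.uIcc (P / 4) (4 * P) ⊆ Set.Ioi (0 : ℝ) := by
    rw [Set.uIcc_of_le hab]; intro x hx; exact lt_of_lt_of_le (by positivity) hx.1
  have key := intervalIntegral.hasDerivAt_integral_of_dominated_loc_of_deriv_le
    (a := P / 4) (b := 4 * P) (μ := MeasureTheory.volume)
    (F := fun τ' x => (Complex.I * s * x) ^ n * ((x ^ (-β) * φ (x / P) : ℝ) : ℂ) *
      Complex.exp (Complex.I * ((x ^ α + s * τ' * x : ℝ) : ℂ)))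
    (F' := fun τ' x => (Complex.I * s * x) ^ (n + 1) * ((x ^ (-β) * φ (x / P) : ℝ) : ℂ) *
      Complex.exp (Complex.I * ((x ^ α + s * τ' * x : ℝ) : ℂ)))
    (bound := fun x => ‖(Complex.I * s * x) ^ (n + 1) * ((x ^ (-β) * φ (x / P) : ℝ) : ℂ)‖)
    (x₀ := τ) (s := Metric.ball τ 1) (Metric.ball_mem_nhds τ one_pos)
    (Filter.Eventually.of_forall (fun τ' =>
      ((Jint_contOn hφ n τ').mono hsubIoc).aestronglyMeasurable measurableSet_uIoc))
    (((Jint_contOn hφ n τ).mono hsubIcc).intervalIntegrable)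
    (((Jint_contOn hφ (n + 1) τ).mono hsubIoc).aestronglyMeasurable measurableSet_uIoc)
    (Filter.Eventually.of_forall (fun x => fun _hx τ' _hτ' => by
      rw [norm_mul, normExpI, mul_one]))
    (ContinuousOn.intervalIntegrable
      (((((ampn_cont (n + 1)).continuousOn.mul (psi_contOn hφ))).mono hsubIcc).norm))
    (Filter.Eventually.of_forall (fun x => fun _hx τ' _hτ' => by
      have e : (fun t : ℝ => x ^ α + s * t * x) = (fun t : ℝ => x ^ α + (s * x) * t) := by
        funext t; ring
      have h0 : HasDerivAt (fun t : ℝ => x ^ α + (s * x) * t) (s * x) τ' := by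
        simpa using ((hasDerivAt_id τ').const_mul (s * x)).const_add (x ^ α)
      have h1 : HasDerivAt (fun t : ℝ => x ^ α + s * t * x) (s * x) τ' := e ▸ h0
      have h2 := ((h1.ofReal_comp).const_mul Complex.I).cexp
      have h3 := h2.const_mul ((Complex.I * s * x) ^ n * ((x ^ (-β) * φ (x / P) : ℝ) : ℂ))
      refine h3.congr_deriv ?_
      push_cast
      ring))
  exact key.2

end JfunFacts


lemma cos_exp_key (A R t : ℝ) :
    (2:ℂ) * (((R * Real.cos t : ℝ) : ℂ) * Complex.exp (Complex.I * (A : ℂ))) =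
      (R : ℂ) * Complex.exp (Complex.I * ((A + t : ℝ) : ℂ)) +
      (R : ℂ) * Complex.exp (Complex.I * ((A - t : ℝ) : ℂ)) := by
  have h2c : (2:ℂ) * Complex.cos t = Complex.exp (t * Complex.I) + Complex.exp (-t * Complex.I) :=
    Complex.two_cos t
  push_cast
  have h1 : (2:ℂ) * ((R : ℂ) * Complex.cos (t : ℂ) * Complex.exp (Complex.I * A)) =
      (R : ℂ) * Complex.exp (Complex.I * A) * (2 * Complex.cos (t : ℂ)) := by ring
  rw [h1, h2c, mul_add]
  congr 1
  · rw [mul_assoc, ← Complex.exp_add]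
    congr 2
    ring
  · rw [mul_assoc, ← Complex.exp_add]
    congr 2
    ring

lemma muHat_eq (α β : ℝ) (φ : ℝ → ℝ) (hφ : Continuous φ)
    (hφsupp : ∀ x : ℝ, φ x ≠ 0 → 1 / 2 ≤ |x| ∧ |x| ≤ 2) (k : ℕ) :
    muHatPiece α β φ k = fun τ =>
      Jfun α β φ ((2:ℝ) ^ k) 1 0 τ + Jfun α β φ ((2:ℝ) ^ k) (-1) 0 τ := by
  funext τ
  have hP : (0:ℝ) < (2:ℝ) ^ k := by positivity
  set P : ℝ := (2:ℝ) ^ k with hP_def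
  have hab : P / 4 ≤ 4 * P := by linarith
  have hsubIcc : Set.uIcc (P / 4) (4 * P) ⊆ Set.Ioi (0 : ℝ) := by
    rw [Set.uIcc_of_le hab]; intro x hx; exact lt_of_lt_of_le (by positivity) hx.1
  rw [muHatPiece]
  have hstep1 : (∫ l in Set.Ioi (0:ℝ),
      ((l ^ (-β) * φ (l / P) * Real.cos (τ * l) : ℝ) : ℂ) *
        Complex.exp (Complex.I * ((l ^ α : ℝ) : ℂ)))
      = ∫ l in Set.Ioc (P / 4) (4 * P),
      ((l ^ (-β) * φ (l / P) * Real.cos (τ * l) : ℝ) : ℂ) *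
        Complex.exp (Complex.I * ((l ^ α : ℝ) : ℂ)) := by
    apply MeasureTheory.setIntegral_eq_of_subset_of_ae_diff_eq_zero
      measurableSet_Ioi.nullMeasurableSet
      (fun x hx => lt_trans (by positivity) hx.1)
    apply Filter.Eventually.of_forall
    intro x hx
    obtain ⟨hx0, hxn⟩ := hx
    have hx0' : (0:ℝ) < x := hx0
    have hφ0 : φ (x / P) = 0 := by
      by_contra h
      obtain ⟨h1, h2⟩ := hφsupp _ h
      rw [abs_of_pos (div_pos hx0' hP)] at h1 h2
      rw [le_div_iff₀ hP] at h1
      rw [div_le_iff₀ hP] at h2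
      exact hxn ⟨by linarith, by linarith⟩
    simp [hφ0]
  rw [hstep1, ← intervalIntegral.integral_of_le hab]
  rw [← intervalIntegral.integral_const_mul]
  have hpt : Set.EqOn
      (fun x : ℝ => (2:ℂ) * (((x ^ (-β) * φ (x / P) * Real.cos (τ * x) : ℝ) : ℂ) *
        Complex.exp (Complex.I * ((x ^ α : ℝ) : ℂ))))
      (fun x : ℝ =>
        (Complex.I * (1:ℝ) * x) ^ 0 * ((x ^ (-β) * φ (x / P) : ℝ) : ℂ) *
          Complex.exp (Complex.I * ((x ^ α + (1:ℝ) * τ * x : ℝ) : ℂ)) +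
        (Complex.I * (-1:ℝ) * x) ^ 0 * ((x ^ (-β) * φ (x / P) : ℝ) : ℂ) *
          Complex.exp (Complex.I * ((x ^ α + (-1:ℝ) * τ * x : ℝ) : ℂ)))
      (Set.uIcc (P / 4) (4 * P)) := by
    intro x _
    simp only [pow_zero, one_mul]
    have e2 : x ^ α + (-1:ℝ) * τ * x = x ^ α - τ * x := by ring
    rw [e2]
    have e3 : (x ^ (-β) * φ (x / P) * Real.cos (τ * x) : ℝ) =
        ((x ^ (-β) * φ (x / P)) * Real.cos (τ * x) : ℝ) := by ring
    rw [e3]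
    exact cos_exp_key (x ^ α) (x ^ (-β) * φ (x / P)) (τ * x)
  rw [intervalIntegral.integral_congr hpt]
  rw [intervalIntegral.integral_add
    (((Jint_contOn hφ 0 τ).mono hsubIcc).intervalIntegrable)
    (((Jint_contOn hφ 0 τ).mono hsubIcc).intervalIntegrable)]
  rfl

lemma Jfun_norm_le {α β : ℝ} (hα0 : 0 < α) (hα1 : α < 1) (hβ : 0 < β)
    {φ : ℝ → ℝ} (hφ : ContDiff ℝ (⊤ : ℕ∞) φ)
    {M : ℝ} (hM1 : 1 ≤ M)
    (hM : ∀ y ∈ Set.Icc (1/4 : ℝ) 4, |φ y| ≤ M ∧ |deriv φ y| ≤ M)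
    {P : ℝ} (hP : 1 ≤ P) {s : ℝ} (hs : s = 1 ∨ s = -1) (L : ℕ) (τ : ℝ) :
    ‖Jfun α β φ P s L τ‖ ≤ 10 / Real.sqrt (α * (1 - α) * (4 * P) ^ (α - 2)) *
      ((1 + 4 * ((L : ℝ) + 4 * β + 1)) *
        ((4:ℝ) ^ ((L : ℝ) + β) * M * (P ^ L * P ^ (-β)))) := by
  have hφc : Continuous φ := hφ.continuous
  have hφ'c : Continuous (deriv φ) := hφ.continuous_deriv (by simp)
  have hP0 : (0:ℝ) < P := lt_of_lt_of_le one_pos hP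
  have ha : (0:ℝ) < P / 4 := by linarith
  have hab : P / 4 ≤ 4 * P := by linarith
  have hs' : |s| = 1 := by rcases hs with h | h <;> simp [h]
  -- phase
  set g : ℝ → ℝ := fun x => x ^ α + s * τ * x with hg_def
  set g₁ : ℝ → ℝ := fun x => α * x ^ (α - 1) + s * τ with hg₁_def
  set g₂ : ℝ → ℝ := fun x => α * ((α - 1) * x ^ (α - 2)) with hg₂_def
  have hg : ∀ x ∈ Set.Ioi (0:ℝ), HasDerivAt g (g₁ x) x := by
    intro x hx
    have h1 : HasDerivAt (fun x : ℝ => x ^ α) (α * x ^ (α - 1)) x :=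
      Real.hasDerivAt_rpow_const (Or.inl (ne_of_gt hx))
    have h2 : HasDerivAt (fun x : ℝ => s * τ * x) (s * τ) x := by
      simpa using (hasDerivAt_id x).const_mul (s * τ)
    exact h1.add h2
  have hg₁ : ∀ x ∈ Set.Ioi (0:ℝ), HasDerivAt g₁ (g₂ x) x := by
    intro x hx
    have h1 : HasDerivAt (fun x : ℝ => x ^ (α - 1)) ((α - 1) * x ^ (α - 1 - 1)) x :=
      Real.hasDerivAt_rpow_const (Or.inl (ne_of_gt hx))
    have h2 := (h1.const_mul α).add_const (s * τ)
    have e : α - 1 - 1 = α - 2 := by ring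
    rw [e] at h2
    exact h2
  have hg₂c : ContinuousOn g₂ (Set.Ioi 0) := by
    apply continuousOn_const.mul
    apply continuousOn_const.mul
    exact fun x hx =>
      (Real.continuousAt_rpow_const x (α - 2) (Or.inl (ne_of_gt hx))).continuousWithinAt
  -- amplitude
  set r : ℝ → ℝ := fun x => x ^ (-β) * φ (x / P) with hr_def
  set r' : ℝ → ℝ := fun x =>
    (-β * x ^ (-β - 1)) * φ (x / P) + x ^ (-β) * (deriv φ (x / P) * (1 / P)) with hr'_def
  set A : ℝ → ℂ := fun x => (Complex.I * s * x) ^ L * ((r x : ℝ) : ℂ) with hA_def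
  set A' : ℝ → ℂ := fun x =>
    ((L : ℂ) * (Complex.I * s * x) ^ (L - 1) * (Complex.I * s)) * ((r x : ℝ) : ℂ) +
      (Complex.I * s * x) ^ L * ((r' x : ℝ) : ℂ) with hA'_def
  have hr : ∀ x ∈ Set.Ioi (0:ℝ), HasDerivAt r (r' x) x := by
    intro x hx
    have h1 : HasDerivAt (fun x : ℝ => x ^ (-β)) (-β * x ^ (-β - 1)) x :=
      Real.hasDerivAt_rpow_const (Or.inl (ne_of_gt hx))
    have hφd : HasDerivAt φ (deriv φ (x / P)) (x / P) :=
      ((hφ.differentiable (by simp)) (x / P)).hasDerivAt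
    have hdiv : HasDerivAt (fun y : ℝ => y / P) (1 / P) x := by
      simpa using (hasDerivAt_id x).div_const P
    have hcomp : HasDerivAt (fun y : ℝ => φ (y / P)) (deriv φ (x / P) * (1 / P)) x :=
      HasDerivAt.comp x hφd hdiv
    exact h1.mul hcomp
  have hA : ∀ x ∈ Set.Ioi (0:ℝ), HasDerivAt A (A' x) x := by
    intro x hx
    have hpow0 : HasDerivAt (fun y : ℝ => ((y : ℂ)) ^ L) ((L : ℂ) * (x : ℂ) ^ (L - 1)) x := by
      simpa [Complex.ofReal_pow, Complex.ofReal_mul, Complex.ofReal_natCast] using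
        (hasDerivAt_pow L x).ofReal_comp
    have hpowA : HasDerivAt (fun y : ℝ => (Complex.I * s * (y : ℂ)) ^ L)
        ((L : ℂ) * (Complex.I * s * x) ^ (L - 1) * (Complex.I * s)) x := by
      have h1 := hpow0.const_mul ((Complex.I * (s : ℂ)) ^ L)
      have e : (fun y : ℝ => (Complex.I * (s:ℂ)) ^ L * (y : ℂ) ^ L)
          = (fun y : ℝ => (Complex.I * s * (y : ℂ)) ^ L) := by
        funext y; ring
      rw [e] at h1
      refine h1.congr_deriv ?_
      symm
      rw [mul_pow]
      cases L with
      | zero => simp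
      | succ m => rw [Nat.succ_sub_one]; push_cast; ring
    exact hpowA.mul ((hr x hx).ofReal_comp)
  have hA'c : ContinuousOn A' (Set.Ioi 0) := by
    have hc1 : ContinuousOn (fun x : ℝ => ((r x : ℝ) : ℂ)) (Set.Ioi 0) := psi_contOn hφc
    have hc2 : ContinuousOn (fun x : ℝ => ((r' x : ℝ) : ℂ)) (Set.Ioi 0) := by
      apply Complex.continuous_ofReal.comp_continuousOn
      have hb1 : ContinuousOn (fun x : ℝ => x ^ (-β - 1)) (Set.Ioi 0) := fun x hx =>
        (Real.continuousAt_rpow_const x (-β - 1) (Or.inl (ne_of_gt hx))).continuousWithinAt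
      have hb2 : ContinuousOn (fun x : ℝ => x ^ (-β)) (Set.Ioi 0) := fun x hx =>
        (Real.continuousAt_rpow_const x (-β) (Or.inl (ne_of_gt hx))).continuousWithinAt
      apply ContinuousOn.add
      · exact (continuousOn_const.mul hb1).mul
          ((hφc.comp (continuous_id.div_const P)).continuousOn)
      · exact hb2.mul
          (((hφ'c.comp (continuous_id.div_const P)).mul continuous_const).continuousOn)
    exact ((continuous_const.mul (ampn_cont (L - 1)) |>.mul continuous_const).continuousOn.mul
      hc1).add ((ampn_cont L).continuousOn.mul hc2)
  -- second derivative bound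
  set δ : ℝ := α * (1 - α) * (4 * P) ^ (α - 2) with hδ_def
  have hδ : 0 < δ := by
    apply mul_pos (mul_pos hα0 (by linarith))
    exact Real.rpow_pos_of_pos (by linarith) _
  have hgg : ∀ x ∈ Set.Icc (P / 4) (4 * P), g₂ x ≤ -δ := by
    intro x hx
    have hx0 : (0:ℝ) < x := lt_of_lt_of_le ha hx.1
    have h1 : (4 * P) ^ (α - 2) ≤ x ^ (α - 2) :=
      Real.rpow_le_rpow_of_nonpos hx0 hx.2 (by linarith)
    have h2 : α * (1 - α) * (4 * P) ^ (α - 2) ≤ α * (1 - α) * x ^ (α - 2) := by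
      apply mul_le_mul_of_nonneg_left h1
      exact le_of_lt (mul_pos hα0 (by linarith))
    simp only [hg₂_def, hδ_def]
    nlinarith [Real.rpow_pos_of_pos hx0 (α - 2)]
  -- apply vdc2_amp
  have hmain := vdc2_amp (g := g) (g₁ := g₁) (g₂ := g₂) (A := A) (A' := A')
    ha hab hg hg₁ hg₂c hA hA'c hδ hgg
  have hJeq : Jfun α β φ P s L τ = ∫ x in (P / 4)..(4 * P), A x * Complex.exp (Complex.I * g x) :=
    rfl
  rw [hJeq]
  refine hmain.trans ?_
  apply mul_le_mul_of_nonneg_left _ (by positivity)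
  -- now bound ‖A b‖ + ∫ ‖A'‖
  have hQpos : (0:ℝ) < P ^ L * P ^ (-β) := by positivity
  have hnormIsx : ∀ x : ℝ, 0 < x → ‖(Complex.I * (s:ℂ) * (x:ℂ))‖ = x := by
    intro x hx0
    rw [norm_mul, norm_mul, Complex.norm_I, one_mul, Complex.norm_real, Complex.norm_real,
      Real.norm_eq_abs, Real.norm_eq_abs, hs', one_mul, abs_of_pos hx0]
  have hrpow4 : ((P / 4 : ℝ)) ^ (-β) = 4 ^ β * P ^ (-β) := by
    rw [Real.div_rpow hP0.le (by norm_num : (0:ℝ) ≤ 4), Real.rpow_neg (by norm_num : (0:ℝ) ≤ 4),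
      div_eq_mul_inv, inv_inv]
    ring
  have hrpow4' : ((P / 4 : ℝ)) ^ (-β - 1) = 4 ^ β * 4 * P ^ (-β) / P := by
    have e1 : (-β - 1 : ℝ) = -β + (-1) := by ring
    rw [e1, Real.rpow_add (by linarith : (0:ℝ) < P / 4), Real.rpow_neg_one, hrpow4]
    field_simp
  have hpow4 : ((4 * P : ℝ)) ^ L = 4 ^ L * P ^ L := mul_pow 4 P L
  have h4Lβ : (4:ℝ) ^ L * 4 ^ β = 4 ^ ((L : ℝ) + β) := by
    rw [Real.rpow_add (by norm_num : (0:ℝ) < 4), Real.rpow_natCast]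
  -- bounds on r and r'
  have hxmem : ∀ x ∈ Set.Icc (P / 4) (4 * P), x / P ∈ Set.Icc (1/4 : ℝ) 4 := by
    intro x hx
    constructor
    · rw [le_div_iff₀ hP0]; linarith [hx.1]
    · rw [div_le_iff₀ hP0]; linarith [hx.2]
  have claimA : ∀ x ∈ Set.Icc (P / 4) (4 * P), ‖A x‖ ≤ (4:ℝ) ^ ((L:ℝ) + β) * M * (P ^ L * P ^ (-β)) := by
    intro x hx
    have hx0 : (0:ℝ) < x := lt_of_lt_of_le ha hx.1
    have hφb := (hM _ (hxmem x hx)).1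
    rw [hA_def]
    rw [norm_mul, norm_pow, hnormIsx x hx0, Complex.norm_real, Real.norm_eq_abs]
    have h1 : x ^ L ≤ 4 ^ L * P ^ L := by
      rw [← hpow4]; exact pow_le_pow_left₀ hx0.le hx.2 L
    have h2 : |r x| ≤ 4 ^ β * P ^ (-β) * M := by
      rw [hr_def, abs_mul, abs_of_nonneg (Real.rpow_nonneg hx0.le (-β))]
      have h3 : x ^ (-β) ≤ 4 ^ β * P ^ (-β) := by
        rw [← hrpow4]
        exact Real.rpow_le_rpow_of_nonpos ha hx.1 (by linarith)
      exact mul_le_mul h3 hφb (abs_nonneg _) (by positivity)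
    calc x ^ L * |r x| ≤ (4 ^ L * P ^ L) * (4 ^ β * P ^ (-β) * M) := by
          apply mul_le_mul h1 h2 (abs_nonneg _) (by positivity)
      _ = (4:ℝ) ^ ((L:ℝ) + β) * M * (P ^ L * P ^ (-β)) := by rw [← h4Lβ]; ring
  have claimA' : ∀ x ∈ Set.Icc (P / 4) (4 * P),
      ‖A' x‖ ≤ ((L : ℝ) + 4 * β + 1) * ((4:ℝ) ^ ((L:ℝ) + β) * M * (P ^ L * P ^ (-β))) / P := by
    intro x hx
    have hx0 : (0:ℝ) < x := lt_of_lt_of_le ha hx.1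
    have hφb := (hM _ (hxmem x hx)).1
    have hφ'b := (hM _ (hxmem x hx)).2
    have hxL : x ^ L ≤ 4 ^ L * P ^ L := by
      rw [← hpow4]; exact pow_le_pow_left₀ hx0.le hx.2 L
    have hxβ : x ^ (-β) ≤ 4 ^ β * P ^ (-β) := by
      rw [← hrpow4]
      exact Real.rpow_le_rpow_of_nonpos ha hx.1 (by linarith)
    have hxβ1 : x ^ (-β - 1) ≤ 4 ^ β * 4 * P ^ (-β) / P := by
      rw [← hrpow4']
      exact Real.rpow_le_rpow_of_nonpos ha hx.1 (by linarith)
    have hrb : |r x| ≤ 4 ^ β * P ^ (-β) * M := by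
      rw [hr_def, abs_mul, abs_of_nonneg (Real.rpow_nonneg hx0.le (-β))]
      exact mul_le_mul hxβ hφb (abs_nonneg _) (by positivity)
    have hT1 : (L : ℝ) * x ^ (L - 1) ≤ (L : ℝ) * (4 ^ L * P ^ L) / P := by
      rcases Nat.eq_zero_or_pos L with h | h
      · simp [h]
      · have h1 : x ^ (L - 1) ≤ (4 * P) ^ (L - 1) := pow_le_pow_left₀ hx0.le hx.2 (L - 1)
        have h2 : (4 * P : ℝ) ^ (L - 1) * P ≤ (4 * P) ^ L := by
          calc (4 * P : ℝ) ^ (L - 1) * P ≤ (4 * P) ^ (L - 1) * (4 * P) := by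
                apply mul_le_mul_of_nonneg_left (by linarith) (by positivity)
            _ = (4 * P) ^ (L - 1 + 1) := (pow_succ _ _).symm
            _ = (4 * P) ^ L := by rw [Nat.sub_add_cancel h]
        rw [← hpow4, le_div_iff₀ hP0]
        calc (L : ℝ) * x ^ (L - 1) * P ≤ (L : ℝ) * ((4 * P) ^ (L - 1) * P) := by
              rw [mul_assoc]
              apply mul_le_mul_of_nonneg_left _ (Nat.cast_nonneg L)
              apply mul_le_mul_of_nonneg_right h1 hP0.le
          _ ≤ (L : ℝ) * (4 * P) ^ L := mul_le_mul_of_nonneg_left h2 (Nat.cast_nonneg L)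
    have hnorm1 : ‖((L : ℂ) * (Complex.I * s * x) ^ (L - 1) * (Complex.I * s)) * ((r x : ℝ) : ℂ)‖
        = (L : ℝ) * x ^ (L - 1) * |r x| := by
      rw [norm_mul, norm_mul, norm_mul, norm_pow, hnormIsx x hx0, norm_mul, Complex.norm_I,
        one_mul, Complex.norm_real, Real.norm_eq_abs, hs', mul_one, Complex.norm_natCast,
        Complex.norm_real, Real.norm_eq_abs]
    have hnorm2 : ‖(Complex.I * (s:ℂ) * (x:ℂ)) ^ L * ((r' x : ℝ) : ℂ)‖ = x ^ L * |r' x| := by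
      rw [norm_mul, norm_pow, hnormIsx x hx0, Complex.norm_real, Real.norm_eq_abs]
    have hr'b : |r' x| ≤ (4 * β + 1) * (4 ^ β * P ^ (-β) * M) / P := by
      rw [hr'_def]
      have h1 : |(-β * x ^ (-β - 1)) * φ (x / P)| ≤ β * (4 ^ β * 4 * P ^ (-β) / P) * M := by
        rw [abs_mul, abs_mul, abs_neg, abs_of_pos hβ,
          abs_of_nonneg (Real.rpow_nonneg hx0.le (-β - 1))]
        apply mul_le_mul _ hφb (abs_nonneg _) (by positivity)
        exact mul_le_mul_of_nonneg_left hxβ1 hβ.le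
      have h2 : |x ^ (-β) * (deriv φ (x / P) * (1 / P))| ≤ (4 ^ β * P ^ (-β)) * (M * (1 / P)) := by
        rw [abs_mul, abs_mul, abs_of_nonneg (Real.rpow_nonneg hx0.le (-β)),
          abs_of_nonneg (by positivity : (0:ℝ) ≤ 1 / P)]
        apply mul_le_mul hxβ _ (by positivity) (by positivity)
        exact mul_le_mul_of_nonneg_right hφ'b (by positivity)
      calc |(-β * x ^ (-β - 1)) * φ (x / P) + x ^ (-β) * (deriv φ (x / P) * (1 / P))|
          ≤ |(-β * x ^ (-β - 1)) * φ (x / P)| + |x ^ (-β) * (deriv φ (x / P) * (1 / P))| :=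
            abs_add_le _ _
        _ ≤ β * (4 ^ β * 4 * P ^ (-β) / P) * M + (4 ^ β * P ^ (-β)) * (M * (1 / P)) :=
            add_le_add h1 h2
        _ = (4 * β + 1) * (4 ^ β * P ^ (-β) * M) / P := by field_simp
    calc ‖A' x‖ ≤ ‖((L : ℂ) * (Complex.I * s * x) ^ (L - 1) * (Complex.I * s)) * ((r x : ℝ) : ℂ)‖
        + ‖(Complex.I * (s:ℂ) * (x:ℂ)) ^ L * ((r' x : ℝ) : ℂ)‖ := norm_add_le _ _
      _ = (L : ℝ) * x ^ (L - 1) * |r x| + x ^ L * |r' x| := by rw [hnorm1, hnorm2]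
      _ ≤ ((L : ℝ) * (4 ^ L * P ^ L) / P) * (4 ^ β * P ^ (-β) * M)
          + (4 ^ L * P ^ L) * ((4 * β + 1) * (4 ^ β * P ^ (-β) * M) / P) := by
          apply add_le_add
          · apply mul_le_mul hT1 hrb (abs_nonneg _) (by positivity)
          · apply mul_le_mul hxL hr'b (abs_nonneg _) (by positivity)
      _ = ((L : ℝ) + 4 * β + 1) * ((4 ^ L * 4 ^ β) * M * (P ^ L * P ^ (-β))) / P := by
          field_simp; ring
      _ = ((L : ℝ) + 4 * β + 1) * ((4:ℝ) ^ ((L:ℝ) + β) * M * (P ^ L * P ^ (-β))) / P := by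
          rw [h4Lβ]
  -- integrate the A' bound
  have hInt : (∫ x in (P / 4)..(4 * P), ‖A' x‖) ≤
      4 * (((L : ℝ) + 4 * β + 1) * ((4:ℝ) ^ ((L:ℝ) + β) * M * (P ^ L * P ^ (-β)))) := by
    have hsubIcc : Set.uIcc (P / 4) (4 * P) ⊆ Set.Ioi (0 : ℝ) := by
      rw [Set.uIcc_of_le hab]; intro x hx; exact lt_of_lt_of_le ha hx.1
    have hKnn : (0:ℝ) ≤ ((L : ℝ) + 4 * β + 1) * ((4:ℝ) ^ ((L:ℝ) + β) * M * (P ^ L * P ^ (-β))) / P := by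
      positivity
    have h1 : (∫ x in (P / 4)..(4 * P), ‖A' x‖) ≤
        ∫ _x in (P / 4)..(4 * P),
          ((L : ℝ) + 4 * β + 1) * ((4:ℝ) ^ ((L:ℝ) + β) * M * (P ^ L * P ^ (-β))) / P := by
      apply intervalIntegral.integral_mono_on hab
      · exact ((hA'c.mono hsubIcc).norm).intervalIntegrable
      · exact intervalIntegrable_const
      · intro x hx
        exact claimA' x hx
    rw [intervalIntegral.integral_const, smul_eq_mul] at h1
    refine h1.trans ?_
    have hKnn2 : (0:ℝ) ≤ ((L : ℝ) + 4 * β + 1) * ((4:ℝ) ^ ((L:ℝ) + β) * M * (P ^ L * P ^ (-β))) := by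
      positivity
    have e : (4 * P - P / 4) *
        (((L : ℝ) + 4 * β + 1) * ((4:ℝ) ^ ((L:ℝ) + β) * M * (P ^ L * P ^ (-β))) / P)
        = (4 - 4⁻¹) * (((L : ℝ) + 4 * β + 1) * ((4:ℝ) ^ ((L:ℝ) + β) * M * (P ^ L * P ^ (-β)))) := by
      field_simp
    rw [e]
    nlinarith [hKnn2]
  calc ‖A (4 * P)‖ + ∫ x in (P / 4)..(4 * P), ‖A' x‖
      ≤ (4:ℝ) ^ ((L:ℝ) + β) * M * (P ^ L * P ^ (-β))
        + 4 * (((L : ℝ) + 4 * β + 1) * ((4:ℝ) ^ ((L:ℝ) + β) * M * (P ^ L * P ^ (-β)))) :=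
        add_le_add (claimA (4 * P) ⟨hab, le_refl _⟩) hInt
    _ = (1 + 4 * ((L : ℝ) + 4 * β + 1)) * ((4:ℝ) ^ ((L:ℝ) + β) * M * (P ^ L * P ^ (-β))) := by
        ring

lemma minT_bounds {α c₁ c₂ : ℝ} (hα0 : 0 < α) (hα1 : α < 1) (hc₂pos : 0 < c₂)
    (hc₁ : c₁ = c₂⁻¹) (hc₂1 : 1 ≤ c₂) {k : ℕ} {τ : ℝ}
    (hlo : c₁ * 2 ^ ((k : ℝ) * (α - 1) - 1) ≤ |τ|)
    (hhi : |τ| ≤ c₂ * 2 ^ ((k : ℝ) * (α - 1) + 1)) :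
    (2 * c₂) ^ (-(1:ℝ)/2) * (2:ℝ) ^ ((k:ℝ) * (-α/2)) ≤
        min 1 (|τ| ^ (-(1:ℝ)/2) * 2 ^ (-(k : ℝ) / 2)) ∧
      min 1 (|τ| ^ (-(1:ℝ)/2) * 2 ^ (-(k : ℝ) / 2)) ≤
        (2 * c₂) ^ ((1:ℝ)/2) * (2:ℝ) ^ ((k:ℝ) * (-α/2)) := by
  have hc₁pos : 0 < c₁ := by rw [hc₁]; positivity
  have hτpos : 0 < |τ| := lt_of_lt_of_le (by positivity) hlo
  have h2c₂ : (1:ℝ) ≤ 2 * c₂ := by linarith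
  have h2c₂pos : (0:ℝ) < 2 * c₂ := by linarith
  set T : ℝ := (2:ℝ) ^ ((k:ℝ) * (-α/2)) with hT_def
  set m : ℝ := |τ| ^ (-(1:ℝ)/2) * 2 ^ (-(k : ℝ) / 2) with hm_def
  have hTpos : 0 < T := Real.rpow_pos_of_pos two_pos _
  -- KEY1 : lower bound for m
  have hhi' : |τ| ≤ (2 * c₂) * (2:ℝ) ^ ((k:ℝ) * (α - 1)) := by
    refine hhi.trans (le_of_eq ?_)
    rw [Real.rpow_add two_pos, Real.rpow_one]
    ring
  have h1 : ((2 * c₂) * (2:ℝ) ^ ((k:ℝ) * (α - 1))) ^ (-(1:ℝ)/2) ≤ |τ| ^ (-(1:ℝ)/2) :=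
    Real.rpow_le_rpow_of_nonpos hτpos hhi' (by norm_num)
  have h2 : ((2 * c₂) * (2:ℝ) ^ ((k:ℝ) * (α - 1))) ^ (-(1:ℝ)/2)
      = (2 * c₂) ^ (-(1:ℝ)/2) * (2:ℝ) ^ ((k:ℝ) * (α - 1) * (-(1:ℝ)/2)) := by
    rw [Real.mul_rpow h2c₂pos.le (by positivity), ← Real.rpow_mul (by norm_num : (0:ℝ) ≤ 2)]
  have KEY1 : (2 * c₂) ^ (-(1:ℝ)/2) * T ≤ m := by
    have e : (2 * c₂) ^ (-(1:ℝ)/2) * T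
        = ((2 * c₂) ^ (-(1:ℝ)/2) * (2:ℝ) ^ ((k:ℝ) * (α - 1) * (-(1:ℝ)/2))) *
          (2:ℝ) ^ (-(k : ℝ) / 2) := by
      rw [mul_assoc, ← Real.rpow_add two_pos, hT_def]
      congr 2
      ring
    rw [e, hm_def]
    apply mul_le_mul_of_nonneg_right (h2 ▸ h1) (by positivity)
  -- KEY2 : upper bound for m
  have hlo' : (c₁ / 2) * (2:ℝ) ^ ((k:ℝ) * (α - 1)) ≤ |τ| := by
    refine le_trans (le_of_eq ?_) hlo
    rw [Real.rpow_sub two_pos, Real.rpow_one]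
    ring
  have h3 : |τ| ^ (-(1:ℝ)/2) ≤ ((c₁ / 2) * (2:ℝ) ^ ((k:ℝ) * (α - 1))) ^ (-(1:ℝ)/2) :=
    Real.rpow_le_rpow_of_nonpos (by positivity) hlo' (by norm_num)
  have h4 : ((c₁ / 2) * (2:ℝ) ^ ((k:ℝ) * (α - 1))) ^ (-(1:ℝ)/2)
      = (c₁ / 2) ^ (-(1:ℝ)/2) * (2:ℝ) ^ ((k:ℝ) * (α - 1) * (-(1:ℝ)/2)) := by
    rw [Real.mul_rpow (by positivity) (by positivity),
      ← Real.rpow_mul (by norm_num : (0:ℝ) ≤ 2)]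
  have h5 : (c₁ / 2 : ℝ) ^ (-(1:ℝ)/2) = (2 * c₂) ^ ((1:ℝ)/2) := by
    have e : (c₁ / 2 : ℝ) = (2 * c₂)⁻¹ := by
      rw [hc₁]
      field_simp
    rw [e, Real.inv_rpow h2c₂pos.le, show (-(1:ℝ)/2) = -((1:ℝ)/2) from by norm_num,
      Real.rpow_neg h2c₂pos.le, inv_inv]
  have KEY2 : m ≤ (2 * c₂) ^ ((1:ℝ)/2) * T := by
    have e : (2 * c₂) ^ ((1:ℝ)/2) * T
        = ((2 * c₂) ^ ((1:ℝ)/2) * (2:ℝ) ^ ((k:ℝ) * (α - 1) * (-(1:ℝ)/2))) *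
          (2:ℝ) ^ (-(k : ℝ) / 2) := by
      rw [mul_assoc, ← Real.rpow_add two_pos, hT_def]
      congr 2
      ring
    rw [e, hm_def]
    apply mul_le_mul_of_nonneg_right _ (by positivity)
    rw [← h5, ← h4]
    exact h3
  constructor
  · apply le_min _ KEY1
    have hT1 : T ≤ 1 := Real.rpow_le_one_of_one_le_of_nonpos one_le_two
      (mul_nonpos_of_nonneg_of_nonpos (Nat.cast_nonneg k) (by linarith))
    have hc : (2 * c₂) ^ (-(1:ℝ)/2) ≤ 1 :=
      Real.rpow_le_one_of_one_le_of_nonpos h2c₂ (by norm_num)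
    calc (2 * c₂) ^ (-(1:ℝ)/2) * T ≤ 1 * 1 :=
          mul_le_mul hc hT1 hTpos.le zero_le_one
      _ = 1 := mul_one 1
  · exact (min_le_right _ _).trans KEY2

/-- Lemma 3.2, third estimate (region `E_{3,k}`). For every `k ≥ 1` and
`c₁ 2^{k(α−1)−1} ≤ |τ| ≤ c₂ 2^{k(α−1)+1}`,
`|(d/dτ)^L μ̂_{α,β,k}(τ)| ≤ C 2^{k(L+1−β)} min{1, |τ|^{−1/2} 2^{−k/2}}`,
and in this range the right-hand side is comparable to `2^{k(L+1−β−α/2)}`. -/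
theorem stmt4 (α β : ℝ) (hα0 : 0 < α) (hα1 : α < 1) (hβ : 0 < β) (L : ℕ)
    (φ : ℝ → ℝ) (hφ : ContDiff ℝ (⊤ : ℕ∞) φ) (hφnonneg : ∀ x, 0 ≤ φ x)
    (hφeven : ∀ x, φ (-x) = φ x)
    (hφsupp : ∀ x : ℝ, φ x ≠ 0 → 1 / 2 ≤ |x| ∧ |x| ≤ 2)
    (c₁ c₂ : ℝ) (hc₂ : 2 ^ (100 : ℕ) / α ≤ c₂) (hc₁ : c₁ = c₂⁻¹) :
    ∃ C : ℝ, 0 < C ∧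
      (∀ k : ℕ, 1 ≤ k → ∀ τ : ℝ,
        c₁ * 2 ^ ((k : ℝ) * (α - 1) - 1) ≤ |τ| → |τ| ≤ c₂ * 2 ^ ((k : ℝ) * (α - 1) + 1) →
        ‖iteratedDeriv L (muHatPiece α β φ k) τ‖ ≤
          C * 2 ^ ((k : ℝ) * ((L : ℝ) + 1 - β)) *
            min 1 (|τ| ^ (-(1:ℝ)/2) * 2 ^ (-(k : ℝ) / 2))) ∧
      (∃ c₃ C₄ : ℝ, 0 < c₃ ∧ 0 < C₄ ∧
        ∀ k : ℕ, 1 ≤ k → ∀ τ : ℝ,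
          c₁ * 2 ^ ((k : ℝ) * (α - 1) - 1) ≤ |τ| → |τ| ≤ c₂ * 2 ^ ((k : ℝ) * (α - 1) + 1) →
          c₃ * 2 ^ ((k : ℝ) * ((L : ℝ) + 1 - β - α / 2)) ≤
              2 ^ ((k : ℝ) * ((L : ℝ) + 1 - β)) *
                min 1 (|τ| ^ (-(1:ℝ)/2) * 2 ^ (-(k : ℝ) / 2)) ∧
            2 ^ ((k : ℝ) * ((L : ℝ) + 1 - β)) *
                min 1 (|τ| ^ (-(1:ℝ)/2) * 2 ^ (-(k : ℝ) / 2)) ≤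
              C₄ * 2 ^ ((k : ℝ) * ((L : ℝ) + 1 - β - α / 2))) := by
  have hφc : Continuous φ := hφ.continuous
  have hφ'c : Continuous (deriv φ) := hφ.continuous_deriv (by simp)
  -- bound for φ and its derivative on [1/4, 4]
  obtain ⟨M₁, hM₁⟩ := isCompact_Icc.exists_bound_of_continuousOn
    (hφc.continuousOn : ContinuousOn φ (Set.Icc (1/4 : ℝ) 4))
  obtain ⟨M₂, hM₂⟩ := isCompact_Icc.exists_bound_of_continuousOn
    (hφ'c.continuousOn : ContinuousOn (deriv φ) (Set.Icc (1/4 : ℝ) 4))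
  set M := max 1 (max M₁ M₂) with hM_def
  have hM1 : (1:ℝ) ≤ M := le_max_left _ _
  have hM : ∀ y ∈ Set.Icc (1/4 : ℝ) 4, |φ y| ≤ M ∧ |deriv φ y| ≤ M := by
    intro y hy
    constructor
    · exact le_trans (by simpa using hM₁ y hy) (le_trans (le_max_left _ _) (le_max_right _ _))
    · exact le_trans (by simpa using hM₂ y hy) (le_trans (le_max_right _ _) (le_max_right _ _))
  -- constants
  have hc₂pos : 0 < c₂ := lt_of_lt_of_le (by positivity) hc₂
  have hc₂1 : (1:ℝ) ≤ c₂ := by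
    refine le_trans ?_ hc₂
    rw [le_div_iff₀ hα0]
    nlinarith [pow_pos (two_pos : (0:ℝ) < 2) 100,
      (by norm_num : (1:ℝ) ≤ 2 ^ (100 : ℕ))]
  have h2c₂pos : (0:ℝ) < 2 * c₂ := by linarith
  have hαα : (0:ℝ) < α * (1 - α) := by nlinarith
  have hsqαα : 0 < Real.sqrt (α * (1 - α)) := Real.sqrt_pos.mpr hαα
  set C0 : ℝ := 2 * (10 / Real.sqrt (α * (1 - α)) * (4:ℝ) ^ ((2 - α)/2)) *
    ((1 + 4 * ((L:ℝ) + 4 * β + 1)) * ((4:ℝ) ^ ((L:ℝ) + β) * M)) with hC0_def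
  have hC0pos : 0 < C0 := by
    have h1 : (0:ℝ) < 10 / Real.sqrt (α * (1 - α)) := by positivity
    have h2 : (0:ℝ) < (4:ℝ) ^ ((2 - α)/2) := Real.rpow_pos_of_pos (by norm_num) _
    have h3 : (0:ℝ) < (4:ℝ) ^ ((L:ℝ) + β) := Real.rpow_pos_of_pos (by norm_num) _
    have h4 : (0:ℝ) < M := lt_of_lt_of_le one_pos hM1
    have h5 : (0:ℝ) < 1 + 4 * ((L:ℝ) + 4 * β + 1) := by positivity
    rw [hC0_def]
    positivity
  refine ⟨C0 * (2 * c₂) ^ ((1:ℝ)/2), by positivity, ?_, ?_⟩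
  · -- main estimate
    intro k hk τ hlo hhi
    have hP0 : (0:ℝ) < (2:ℝ) ^ k := by positivity
    have hP1 : (1:ℝ) ≤ (2:ℝ) ^ k := one_le_pow₀ one_le_two
    have hPr : ((2:ℝ) ^ k : ℝ) = (2:ℝ) ^ ((k:ℝ)) := (Real.rpow_natCast 2 k).symm
    have h4P : (0:ℝ) < 4 * (2:ℝ) ^ k := by linarith
    -- identity for the iterated derivative
    have hiter : iteratedDeriv L (muHatPiece α β φ k) τ =
        Jfun α β φ ((2:ℝ) ^ k) 1 L τ + Jfun α β φ ((2:ℝ) ^ k) (-1) L τ := by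
      rw [muHat_eq α β φ hφc hφsupp k]
      exact iteratedDeriv_chain
        (f := fun n τ' => Jfun α β φ ((2:ℝ) ^ k) 1 n τ' + Jfun α β φ ((2:ℝ) ^ k) (-1) n τ')
        (fun n τ' => (hasDerivAt_Jfun hφc hP0 n τ').add (hasDerivAt_Jfun hφc hP0 n τ')) L τ
    have hJ1 := Jfun_norm_le hα0 hα1 hβ hφ hM1 hM hP1 (Or.inl rfl) L τ
    have hJ2 := Jfun_norm_le hα0 hα1 hβ hφ hM1 hM hP1 (Or.inr rfl) L τ
    -- rewrite the bound in terms of powers of 2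
    have hQ : ((2:ℝ) ^ k) ^ L * ((2:ℝ) ^ k) ^ (-β) = (2:ℝ) ^ ((k:ℝ) * ((L:ℝ) - β)) := by
      have h1 : ((2:ℝ) ^ k : ℝ) ^ L = (2:ℝ) ^ ((k:ℝ) * (L:ℝ)) := by
        rw [← Real.rpow_natCast ((2:ℝ) ^ k) L, hPr,
          ← Real.rpow_mul (by norm_num : (0:ℝ) ≤ 2)]
      have h2 : ((2:ℝ) ^ k : ℝ) ^ (-β) = (2:ℝ) ^ ((k:ℝ) * (-β)) := by
        rw [hPr, ← Real.rpow_mul (by norm_num : (0:ℝ) ≤ 2)]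
      rw [h1, h2, ← Real.rpow_add two_pos]
      congr 1
      ring
    have hsq2 : Real.sqrt ((4 * (2:ℝ) ^ k) ^ (α - 2)) = (4 * (2:ℝ) ^ k) ^ ((α - 2)/2) := by
      rw [Real.sqrt_eq_rpow, ← Real.rpow_mul h4P.le]
      congr 1
      ring
    have hs1 : Real.sqrt (α * (1 - α) * (4 * (2:ℝ) ^ k) ^ (α - 2))
        = Real.sqrt (α * (1 - α)) * (4 * (2:ℝ) ^ k) ^ ((α - 2)/2) := by
      rw [Real.sqrt_mul hαα.le, hsq2]
    have hinv : (((4 * (2:ℝ) ^ k) ^ ((α - 2)/2) : ℝ))⁻¹ = (4 * (2:ℝ) ^ k) ^ ((2 - α)/2) := by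
      rw [← Real.rpow_neg h4P.le]
      congr 1
      ring
    have h4Psplit : ((4 * (2:ℝ) ^ k : ℝ)) ^ ((2 - α)/2)
        = (4:ℝ) ^ ((2 - α)/2) * (2:ℝ) ^ ((k:ℝ) * (1 - α/2)) := by
      rw [Real.mul_rpow (by norm_num) hP0.le, hPr,
        ← Real.rpow_mul (by norm_num : (0:ℝ) ≤ 2)]
      congr 2
      ring
    have hE : 10 / Real.sqrt (α * (1 - α) * (4 * (2:ℝ) ^ k) ^ (α - 2))
        = 10 / Real.sqrt (α * (1 - α)) *
          ((4:ℝ) ^ ((2 - α)/2) * (2:ℝ) ^ ((k:ℝ) * (1 - α/2))) := by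
      rw [hs1, div_mul_eq_div_div, div_eq_mul_inv (10 / Real.sqrt (α * (1 - α))), hinv,
        h4Psplit]
    set D : ℝ := (2:ℝ) ^ ((k:ℝ) * ((L:ℝ) + 1 - β - α/2)) with hD_def
    have hexp : (2:ℝ) ^ ((k:ℝ) * (1 - α/2)) * (2:ℝ) ^ ((k:ℝ) * ((L:ℝ) - β)) = D := by
      rw [hD_def, ← Real.rpow_add two_pos]
      congr 1
      ring
    have hB : 10 / Real.sqrt (α * (1 - α) * (4 * (2:ℝ) ^ k) ^ (α - 2)) *
        ((1 + 4 * ((L : ℝ) + 4 * β + 1)) *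
          ((4:ℝ) ^ ((L : ℝ) + β) * M * (((2:ℝ) ^ k) ^ L * ((2:ℝ) ^ k) ^ (-β))))
        = (C0 / 2) * D := by
      rw [hE, hQ, ← hexp, hC0_def]
      ring
    have hbound : ‖iteratedDeriv L (muHatPiece α β φ k) τ‖ ≤ C0 * D := by
      rw [hiter]
      calc ‖Jfun α β φ ((2:ℝ) ^ k) 1 L τ + Jfun α β φ ((2:ℝ) ^ k) (-1) L τ‖
          ≤ ‖Jfun α β φ ((2:ℝ) ^ k) 1 L τ‖ + ‖Jfun α β φ ((2:ℝ) ^ k) (-1) L τ‖ :=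
            norm_add_le _ _
        _ ≤ (C0 / 2) * D + (C0 / 2) * D := add_le_add (hJ1.trans_eq hB) (hJ2.trans_eq hB)
        _ = C0 * D := by ring
    -- min comparison
    obtain ⟨hminlow, _⟩ := minT_bounds hα0 hα1 hc₂pos hc₁ hc₂1 (k := k) (τ := τ) hlo hhi
    set T : ℝ := (2:ℝ) ^ ((k:ℝ) * (-α/2)) with hT_def
    have hTpos : 0 < T := Real.rpow_pos_of_pos two_pos _
    have hsplitD : D = (2:ℝ) ^ ((k:ℝ) * ((L:ℝ) + 1 - β)) * T := by
      rw [hD_def, hT_def, ← Real.rpow_add two_pos]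
      congr 1
      ring
    have hTle : T ≤ (2 * c₂) ^ ((1:ℝ)/2) *
        min 1 (|τ| ^ (-(1:ℝ)/2) * 2 ^ (-(k : ℝ) / 2)) := by
      have h := mul_le_mul_of_nonneg_left hminlow
        (le_of_lt (Real.rpow_pos_of_pos h2c₂pos ((1:ℝ)/2)))
      have hcancel : (2 * c₂) ^ ((1:ℝ)/2) * ((2 * c₂) ^ (-(1:ℝ)/2) * T) = T := by
        rw [← mul_assoc, ← Real.rpow_add h2c₂pos]
        norm_num
      linarith [hcancel ▸ h]
    calc ‖iteratedDeriv L (muHatPiece α β φ k) τ‖ ≤ C0 * D := hbound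
      _ = C0 * ((2:ℝ) ^ ((k:ℝ) * ((L:ℝ) + 1 - β)) * T) := by rw [hsplitD]
      _ ≤ C0 * ((2:ℝ) ^ ((k:ℝ) * ((L:ℝ) + 1 - β)) *
          ((2 * c₂) ^ ((1:ℝ)/2) * min 1 (|τ| ^ (-(1:ℝ)/2) * 2 ^ (-(k : ℝ) / 2)))) := by
          apply mul_le_mul_of_nonneg_left _ hC0pos.le
          exact mul_le_mul_of_nonneg_left hTle (by positivity)
      _ = C0 * (2 * c₂) ^ ((1:ℝ)/2) * 2 ^ ((k : ℝ) * ((L : ℝ) + 1 - β)) *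
          min 1 (|τ| ^ (-(1:ℝ)/2) * 2 ^ (-(k : ℝ) / 2)) := by ring
  · -- comparability of the right-hand side
    refine ⟨(2 * c₂) ^ (-(1:ℝ)/2), (2 * c₂) ^ ((1:ℝ)/2),
      Real.rpow_pos_of_pos h2c₂pos _, Real.rpow_pos_of_pos h2c₂pos _, ?_⟩
    intro k hk τ hlo hhi
    obtain ⟨hminlow, hminhigh⟩ := minT_bounds hα0 hα1 hc₂pos hc₁ hc₂1 (k := k) (τ := τ) hlo hhi
    set T : ℝ := (2:ℝ) ^ ((k:ℝ) * (-α/2)) with hT_def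
    have hsplitD : (2:ℝ) ^ ((k:ℝ) * ((L:ℝ) + 1 - β - α/2))
        = (2:ℝ) ^ ((k:ℝ) * ((L:ℝ) + 1 - β)) * T := by
      rw [hT_def, ← Real.rpow_add two_pos]
      congr 1
      ring
    have hpos2 : (0:ℝ) < (2:ℝ) ^ ((k:ℝ) * ((L:ℝ) + 1 - β)) :=
      Real.rpow_pos_of_pos two_pos _
    constructor
    · calc (2 * c₂) ^ (-(1:ℝ)/2) * 2 ^ ((k : ℝ) * ((L : ℝ) + 1 - β - α / 2))
          = (2:ℝ) ^ ((k:ℝ) * ((L:ℝ) + 1 - β)) * ((2 * c₂) ^ (-(1:ℝ)/2) * T) := by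
            rw [hsplitD]; ring
        _ ≤ (2:ℝ) ^ ((k:ℝ) * ((L:ℝ) + 1 - β)) *
            min 1 (|τ| ^ (-(1:ℝ)/2) * 2 ^ (-(k : ℝ) / 2)) :=
            mul_le_mul_of_nonneg_left hminlow hpos2.le
    · calc (2:ℝ) ^ ((k:ℝ) * ((L:ℝ) + 1 - β)) *
            min 1 (|τ| ^ (-(1:ℝ)/2) * 2 ^ (-(k : ℝ) / 2))
          ≤ (2:ℝ) ^ ((k:ℝ) * ((L:ℝ) + 1 - β)) * ((2 * c₂) ^ ((1:ℝ)/2) * T) :=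
            mul_le_mul_of_nonneg_left hminhigh hpos2.le
        _ = (2 * c₂) ^ ((1:ℝ)/2) * 2 ^ ((k : ℝ) * ((L : ℝ) + 1 - β - α / 2)) := by
            rw [hsplitD]; ring
end

section
/- There is an absolute constant C > 0 with the following property: for every σ > 0, every continuously differentiable function f : [0, σ] → ℂ, every b > 0 and every real number ε, one has sup_{0 < t ≤ σ} |f(t)| ≤ C [ ( b ∫₀^σ t^ε |f′(t)|² dt )^{1/2} + ( b^{−1} ∫₀^σ |f(t)|² t^{−ε} dt )^{1/2} + |f(0)| ]. -/
/-!
With the weight `w s = b s^ε`, Cauchy–Schwarz and AM-GM give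
`(‖f‖²)' = 2⟪f, f'⟫ ≤ w ‖f'‖² + ‖f‖² / w` on `(0, σ)`. Integrating from `0` to `t` bounds
`‖f t‖² - ‖f 0‖²` by the sum of the two weighted integrals, and subadditivity of the square root
gives the inequality with `C = 1`.
-/

open MeasureTheory Set

theorem ENNReal.le_rpow_half_add_of_sq_le {x y p q : ENNReal} (h : x ^ 2 ≤ p + q + y ^ 2) :
    x ≤ p ^ (1 / 2 : ℝ) + q ^ (1 / 2 : ℝ) + y := by
  have hsqrt (z : ENNReal) : (z ^ 2) ^ (1 / 2 : ℝ) = z := by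
    simpa using ENNReal.pow_rpow_inv_natCast (n := 2) two_ne_zero z
  have hhalf : (0 : ℝ) ≤ 1 / 2 := by norm_num
  calc x = (x ^ 2) ^ (1 / 2 : ℝ) := (hsqrt x).symm
    _ ≤ (p + q + y ^ 2) ^ (1 / 2 : ℝ) := ENNReal.rpow_le_rpow h hhalf
    _ ≤ (p + q) ^ (1 / 2 : ℝ) + (y ^ 2) ^ (1 / 2 : ℝ) :=
      ENNReal.rpow_add_le_add_rpow _ _ hhalf (by norm_num)
    _ ≤ p ^ (1 / 2 : ℝ) + q ^ (1 / 2 : ℝ) + y := by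
      rw [hsqrt]
      gcongr
      exact ENNReal.rpow_add_le_add_rpow _ _ hhalf (by norm_num)

theorem two_mul_inner_le_mul_sq_add_sq_div {E : Type*} [NormedAddCommGroup E]
    [InnerProductSpace ℝ E] {w : ℝ} (hw : 0 < w) (x y : E) :
    2 * inner ℝ x y ≤ w * ‖y‖ ^ 2 + ‖x‖ ^ 2 / w := by
  have hCS : inner ℝ x y ≤ ‖x‖ * ‖y‖ := real_inner_le_norm x y
  have hAMGM : 2 * (‖x‖ * ‖y‖) ≤ w * ‖y‖ ^ 2 + ‖x‖ ^ 2 / w := by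
    rw [← sub_nonneg]
    have : w * ‖y‖ ^ 2 + ‖x‖ ^ 2 / w - 2 * (‖x‖ * ‖y‖) = (w * ‖y‖ - ‖x‖) ^ 2 / w := by
      field_simp; ring
    rw [this]; positivity
  linarith

theorem ofReal_sub_le_lintegral_of_hasDerivAt_of_le {g g' φ : ℝ → ℝ} {a b : ℝ} (hab : a ≤ b)
    (hcont : ContinuousOn g (Icc a b)) (hderiv : ∀ x ∈ Ioo a b, HasDerivAt g (g' x) x)
    (hφ : AEMeasurable φ (volume.restrict (Ioc a b))) (hg'φ : ∀ x ∈ Ioo a b, g' x ≤ φ x) :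
    ENNReal.ofReal (g b - g a) ≤ ∫⁻ x in Ioc a b, ENNReal.ofReal (φ x) := by
  -- `max φ 0` has the same `ofReal`, and is integrable as soon as that lintegral is finite.
  set ψ : ℝ → ℝ := fun x ↦ max (φ x) 0
  have hofReal : ∀ x, ENNReal.ofReal (ψ x) = ENNReal.ofReal (φ x) := fun x ↦ by simp [ψ]
  simp_rw [← hofReal]
  rcases eq_or_ne (∫⁻ x in Ioc a b, ENNReal.ofReal (ψ x)) ⊤ with htop | hfin
  · exact htop ▸ le_top
  have hψ0 : 0 ≤ᵐ[volume.restrict (Ioc a b)] ψ := ae_of_all _ fun x ↦ le_max_right _ _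
  have hint : IntegrableOn ψ (Ioc a b) :=
    ⟨(hφ.max aemeasurable_const).aestronglyMeasurable,
      (hasFiniteIntegral_iff_ofReal hψ0).2 hfin.lt_top⟩
  have hFTC : g b - g a ≤ ∫ x in a..b, ψ x :=
    intervalIntegral.sub_le_integral_of_hasDeriv_right_of_le hab hcont
      (fun x hx ↦ (hderiv x hx).hasDerivWithinAt)
      ((integrableOn_Icc_iff_integrableOn_Ioc enorm_ne_top).2 hint)
      (fun x hx ↦ (hg'φ x hx).trans (le_max_left _ _))
  rw [intervalIntegral.integral_of_le hab] at hFTC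
  exact (ENNReal.ofReal_le_ofReal hFTC).trans_eq (ofReal_integral_eq_lintegral_ofReal hint hψ0)

theorem ofReal_sq_norm_le_add_lintegral {E : Type*} [NormedAddCommGroup E]
    [InnerProductSpace ℝ E] [CompleteSpace E] {f : ℝ → E} {w : ℝ → ℝ} {a b : ℝ} (hab : a ≤ b)
    (hcont : ContinuousOn f (Icc a b)) (hdiff : DifferentiableOn ℝ f (Ioo a b))
    (hw : Measurable w) (hw0 : ∀ x ∈ Ioo a b, 0 < w x) :
    ENNReal.ofReal ‖f b‖ ^ 2 ≤ ENNReal.ofReal ‖f a‖ ^ 2 +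
      ((∫⁻ x in Ioc a b, ENNReal.ofReal (w x * ‖deriv f x‖ ^ 2)) +
        ∫⁻ x in Ioc a b, ENNReal.ofReal (‖f x‖ ^ 2 / w x)) := by
  have hnorm : AEMeasurable (‖f ·‖) (volume.restrict (Ioc a b)) :=
    ((hcont.mono Ioc_subset_Icc_self).aestronglyMeasurable measurableSet_Ioc).norm.aemeasurable
  have hnorm' : Measurable fun x ↦ ‖deriv f x‖ := (stronglyMeasurable_deriv f).norm.measurable
  have hmain := ofReal_sub_le_lintegral_of_hasDerivAt_of_le (g := (‖f ·‖ ^ 2))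
    (φ := fun x ↦ w x * ‖deriv f x‖ ^ 2 + ‖f x‖ ^ 2 / w x) hab
    (hcont.norm.pow 2)
    (fun x hx ↦ (hdiff.differentiableAt (isOpen_Ioo.mem_nhds hx)).hasDerivAt.norm_sq)
    ((hw.mul (hnorm'.pow_const 2)).aemeasurable.add ((hnorm.pow_const 2).div hw.aemeasurable))
    (fun x hx ↦ two_mul_inner_le_mul_sq_add_sq_div (hw0 x hx) _ _)
  rw [ENNReal.ofReal_sub _ (by positivity), tsub_le_iff_left] at hmain
  simp only [← ENNReal.ofReal_pow (norm_nonneg _)]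
  refine hmain.trans (add_le_add le_rfl ?_)
  have hm : Measurable fun x ↦ ENNReal.ofReal (w x * ‖deriv f x‖ ^ 2) := by fun_prop
  rw [← lintegral_add_left hm]
  exact lintegral_mono fun x ↦ ENNReal.ofReal_add_le

theorem setLIntegral_ofReal_const_mul_le {α : Type*} [MeasurableSpace α] {μ : Measure α}
    {c : ℝ} (hc : 0 ≤ c) (g : α → ℝ) {s t : Set α} (hst : s ⊆ t) :
    ∫⁻ x in s, ENNReal.ofReal (c * g x) ∂μ ≤
      ENNReal.ofReal c * ∫⁻ x in t, ENNReal.ofReal (g x) ∂μ := by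
  simp_rw [ENNReal.ofReal_mul hc]
  rw [lintegral_const_mul' _ _ ENNReal.ofReal_ne_top]
  gcongr

/-- Lemma 4.1. There is an absolute constant `C > 0` such that for every
`σ > 0`, every continuously differentiable `f : [0, σ] → ℂ`, every `b > 0` and every
real `ε`:
`sup_{0<t≤σ} |f(t)| ≤ C [ (b ∫₀^σ t^ε |f′(t)|² dt)^{1/2} + (b⁻¹ ∫₀^σ |f(t)|² t^{−ε} dt)^{1/2} + |f(0)| ]`.
The integrals are taken in `ℝ≥0∞` so that the inequality is trivially true when either
integral is infinite. -/
theorem stmt7 :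
    ∃ C : ℝ, 0 < C ∧
      ∀ (σ : ℝ) (f : ℝ → ℂ) (b ε : ℝ), 0 < σ → 0 < b →
        ContDiffOn ℝ 1 f (Set.Icc 0 σ) →
        ∀ t : ℝ, 0 < t → t ≤ σ →
          ENNReal.ofReal ‖f t‖ ≤ ENNReal.ofReal C *
            ((ENNReal.ofReal b *
                ∫⁻ s in Set.Ioc (0:ℝ) σ, ENNReal.ofReal (s ^ ε * ‖deriv f s‖ ^ 2)) ^ (1/2 : ℝ) +
             (ENNReal.ofReal b⁻¹ *
                ∫⁻ s in Set.Ioc (0:ℝ) σ, ENNReal.ofReal (‖f s‖ ^ 2 / s ^ ε)) ^ (1/2 : ℝ) +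
             ENNReal.ofReal ‖f 0‖) := by
  refine ⟨1, one_pos, fun σ f b ε _ hb hf t ht htσ ↦ ?_⟩
  have hsub : Icc 0 t ⊆ Icc 0 σ := Icc_subset_Icc_right htσ
  have hIoc : Ioc 0 t ⊆ Ioc 0 σ := Ioc_subset_Ioc_right htσ
  have key := ofReal_sq_norm_le_add_lintegral (w := fun s ↦ b * s ^ ε) ht.le
    (hf.continuousOn.mono hsub)
    ((hf.differentiableOn one_ne_zero).mono (Ioo_subset_Icc_self.trans hsub))
    (by fun_prop) (fun s hs ↦ by have := hs.1; positivity)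
  have hderiv : ∫⁻ s in Ioc 0 t, ENNReal.ofReal (b * s ^ ε * ‖deriv f s‖ ^ 2) ≤
      ENNReal.ofReal b * ∫⁻ s in Ioc 0 σ, ENNReal.ofReal (s ^ ε * ‖deriv f s‖ ^ 2) := by
    simp_rw [mul_assoc]
    exact setLIntegral_ofReal_const_mul_le hb.le _ hIoc
  have hvalue : ∫⁻ s in Ioc 0 t, ENNReal.ofReal (‖f s‖ ^ 2 / (b * s ^ ε)) ≤
      ENNReal.ofReal b⁻¹ * ∫⁻ s in Ioc 0 σ, ENNReal.ofReal (‖f s‖ ^ 2 / s ^ ε) := by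
    simp_rw [div_mul_eq_div_div_swap, div_eq_inv_mul _ b]
    exact setLIntegral_ofReal_const_mul_le (inv_nonneg.2 hb.le) _ hIoc
  rw [ENNReal.ofReal_one, one_mul]
  refine ENNReal.le_rpow_half_add_of_sq_le (key.trans ?_)
  rw [add_comm]
  gcongr
end

section
/- Let N be a positive integer, let c₁, …, c_N be complex numbers satisfying ∑_{k=1}^N c_k = 1 and ∑_{k=1}^N c_k k^j = 0 for all integers 1 ≤ j ≤ N − 1, and let 0 < α < 1. Define E(ξ) = ∑_{k=1}^N c_k e^{ik ξ^α} − 1 for ξ > 0. Then E is C^∞ on (0, ∞), and for every nonnegative integer m there exists a constant C > 0 (depending on N, the c_k, α and m) such that |E^{(m)}(ξ)| ≤ C ξ^{αN − m} for all 0 < ξ ≤ 2. -/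
open Complex Filter Set Topology

noncomputable def uaux : ℕ → ℂ → ℂ := fun n => (fun f => dslope f 0)^[n] Complex.exp

lemma uaux_succ (n : ℕ) : uaux (n + 1) = dslope (uaux n) 0 := by
  simp [uaux, Function.iterate_succ_apply']

lemma uaux_diff (n : ℕ) : Differentiable ℂ (uaux n) := by
  induction n with
  | zero => exact Complex.differentiable_exp
  | succ n ih =>
    rw [uaux_succ, ← differentiableOn_univ]
    exact (Complex.differentiableOn_dslope univ_mem).mpr ih.differentiableOn

lemma dslope_expand (f : ℂ → ℂ) (z : ℂ) : f z = f 0 + z * dslope f 0 z := by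
  rcases eq_or_ne z 0 with h | h
  · simp [h]
  · rw [dslope_of_ne _ h, slope_def_field]
    field_simp
    ring

lemma uaux_spec (n : ℕ) : uaux n 0 = 1 / n.factorial ∧
    ∀ z : ℂ, Complex.exp z = (∑ j ∈ Finset.range n, z ^ j / j.factorial) + z ^ n * uaux n z := by
  induction n with
  | zero => exact ⟨by simp [uaux], fun z => by simp [uaux]⟩
  | succ n ih =>
    obtain ⟨h0, hexp⟩ := ih
    have hexp' : ∀ z : ℂ, Complex.exp z =
        (∑ j ∈ Finset.range (n + 1), z ^ j / j.factorial) + z ^ (n + 1) * uaux (n + 1) z := by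
      intro z
      rw [Finset.sum_range_succ, hexp z, uaux_succ]
      have h2 := dslope_expand (uaux n) z
      rw [h2, h0]
      ring
    refine ⟨?_, hexp'⟩
    have hcont : Tendsto (uaux (n + 1)) (𝓝[≠] (0 : ℂ)) (𝓝 (uaux (n + 1) 0)) :=
      ((uaux_diff (n + 1)).continuous.continuousAt).continuousWithinAt
    have hlim0 : Tendsto (fun z : ℂ => uaux (n + 1) z - 1 / (n + 1).factorial)
        (𝓝[≠] (0 : ℂ)) (𝓝 0) := by
      apply squeeze_zero_norm'
        (a := fun z : ℂ => ((n + 3 : ℝ) * (((n + 2).factorial : ℝ) * (n + 2))⁻¹) * ‖z‖)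
      · have h1 : ∀ᶠ z : ℂ in 𝓝[≠] (0 : ℂ), ‖z‖ ≤ 1 := by
          filter_upwards [nhdsWithin_le_nhds (Metric.closedBall_mem_nhds (0 : ℂ) one_pos)]
            with z hz
          simpa [Complex.dist_eq] using hz
        have h2 : ∀ᶠ z : ℂ in 𝓝[≠] (0 : ℂ), z ≠ 0 := by
          filter_upwards [self_mem_nhdsWithin] with z hz using hz
        filter_upwards [h1, h2] with z hz1 hz2
        have hz : Complex.exp z - ∑ j ∈ Finset.range (n + 2), z ^ j / j.factorial
            = z ^ (n + 1) * (uaux (n + 1) z - 1 / (n + 1).factorial) := by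
          rw [hexp' z, show n + 2 = (n + 1) + 1 from rfl,
            Finset.sum_range_succ (fun j => z ^ j / (j.factorial : ℂ)) (n + 1)]
          ring
        have hb := Complex.exp_bound (x := z) (by simpa using hz1) (n := n + 2) (by omega)
        rw [hz] at hb
        set K : ℝ := (n + 3 : ℝ) * (((n + 2).factorial : ℝ) * (n + 2))⁻¹ with hK
        have hb' : ‖z‖ ^ (n + 1) * ‖uaux (n + 1) z - 1 / ((n + 1).factorial : ℂ)‖
            ≤ ‖z‖ ^ (n + 1) * (K * ‖z‖) := by
          have e1 : ‖z ^ (n + 1) * (uaux (n + 1) z - 1 / ((n + 1).factorial : ℂ))‖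
              = ‖z‖ ^ (n + 1) * ‖uaux (n + 1) z - 1 / ((n + 1).factorial : ℂ)‖ := by
            rw [norm_mul, norm_pow]
          have e2 : ‖z‖ ^ (n + 2) * ((n + 3 : ℝ) * (((n + 2).factorial : ℝ) * (n + 2))⁻¹)
              = ‖z‖ ^ (n + 1) * (K * ‖z‖) := by
            rw [← hK]; ring
          calc ‖z‖ ^ (n + 1) * ‖uaux (n + 1) z - 1 / ((n + 1).factorial : ℂ)‖
              = ‖z ^ (n + 1) * (uaux (n + 1) z - 1 / ((n + 1).factorial : ℂ))‖ := e1.symm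
            _ ≤ ‖z‖ ^ (n + 2) * (((n + 2).succ : ℝ) * (((n + 2).factorial : ℝ) * ((n + 2 : ℕ) : ℝ))⁻¹) := hb
            _ = ‖z‖ ^ (n + 1) * (K * ‖z‖) := by
                rw [hK, Nat.succ_eq_add_one]
                push_cast
                ring
        have hzpos : (0 : ℝ) < ‖z‖ ^ (n + 1) := pow_pos (norm_pos_iff.mpr hz2) _
        have := le_of_mul_le_mul_left hb' hzpos
        simpa using this
      · have : Tendsto (fun z : ℂ => ‖z‖) (𝓝 (0 : ℂ)) (𝓝 0) := by
          simpa using continuous_norm.tendsto (0 : ℂ)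
        have := this.const_mul ((n + 3 : ℝ) * (((n + 2).factorial : ℝ) * (n + 2))⁻¹)
        simpa using this.mono_left nhdsWithin_le_nhds
    have hlim : Tendsto (uaux (n + 1)) (𝓝[≠] (0 : ℂ)) (𝓝 (1 / (n + 1).factorial)) := by
      have := hlim0.add_const ((1 : ℂ) / (n + 1).factorial)
      simpa using this
    exact tendsto_nhds_unique hcont hlim

/-- smoothness and derivative bounds for
`E(ξ) = ∑_{k=1}^N c_k e^{ik ξ^α} − 1` on `(0, ∞)`, under the moment conditions
`∑ c_k = 1` and `∑ c_k k^j = 0` for `1 ≤ j ≤ N − 1`. `E` is `C^∞` on `(0, ∞)` and for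
every `m` there is `C > 0` with `|E^{(m)}(ξ)| ≤ C ξ^{αN − m}` for all `0 < ξ ≤ 2`. -/
theorem stmt14 (N : ℕ) (hN : 0 < N) (c : ℕ → ℂ) (α : ℝ) (hα0 : 0 < α) (hα1 : α < 1)
    (h0 : (∑ k ∈ Finset.Icc 1 N, c k) = 1)
    (h1 : ∀ j : ℕ, 1 ≤ j → j ≤ N - 1 → (∑ k ∈ Finset.Icc 1 N, c k * (k : ℂ) ^ j) = 0) :
    ContDiffOn ℝ (⊤ : ℕ∞)
      (fun ξ : ℝ =>
        (∑ k ∈ Finset.Icc 1 N, c k * Complex.exp (Complex.I * (k : ℂ) * ((ξ ^ α : ℝ) : ℂ))) - 1)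
      (Set.Ioi 0) ∧
    ∀ m : ℕ, ∃ C : ℝ, 0 < C ∧
      ∀ ξ : ℝ, 0 < ξ → ξ ≤ 2 →
        ‖iteratedDeriv m
            (fun ξ : ℝ =>
              (∑ k ∈ Finset.Icc 1 N,
                c k * Complex.exp (Complex.I * (k : ℂ) * ((ξ ^ α : ℝ) : ℂ))) - 1) ξ‖ ≤
          C * ξ ^ (α * (N : ℝ) - (m : ℝ)) := by
  set E : ℝ → ℂ := fun ξ : ℝ =>
      (∑ k ∈ Finset.Icc 1 N, c k * Complex.exp (Complex.I * (k : ℂ) * ((ξ ^ α : ℝ) : ℂ))) - 1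
    with hEdef
  -- the smooth factor h
  set h : ℝ → ℂ := fun t =>
      ∑ k ∈ Finset.Icc 1 N, c k * (Complex.I * (k : ℂ)) ^ N * uaux N (Complex.I * (k : ℂ) * t)
    with hhdef
  have hsm : ContDiff ℝ (⊤ : ℕ∞) h := by
    apply ContDiff.sum
    intro k _
    have h1 : ContDiff ℝ (⊤ : ℕ∞) (uaux N) := ((uaux_diff N).contDiff).restrict_scalars ℝ
    have h2 : ContDiff ℝ (⊤ : ℕ∞) fun t : ℝ => Complex.I * (k : ℂ) * (t : ℝ) :=
      contDiff_const.mul Complex.ofRealCLM.contDiff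
    exact contDiff_const.mul (h1.comp h2)
  -- factorization
  have hfact : ∀ t : ℝ,
      (∑ k ∈ Finset.Icc 1 N, c k * Complex.exp (Complex.I * (k : ℂ) * (t : ℂ))) - 1
        = ((t : ℂ)) ^ N * h t := by
    intro t
    have step1 : (∑ k ∈ Finset.Icc 1 N, c k * Complex.exp (Complex.I * (k : ℂ) * (t : ℂ)))
        = (∑ k ∈ Finset.Icc 1 N, ∑ j ∈ Finset.range N,
            (c k * (k : ℂ) ^ j) * ((Complex.I * t) ^ j / j.factorial))
          + ∑ k ∈ Finset.Icc 1 N,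
              (t : ℂ) ^ N * (c k * (Complex.I * (k : ℂ)) ^ N
                * uaux N (Complex.I * (k : ℂ) * t)) := by
      rw [← Finset.sum_add_distrib]
      refine Finset.sum_congr rfl fun k _ => ?_
      rw [(uaux_spec N).2 (Complex.I * (k : ℂ) * t), mul_add, Finset.mul_sum]
      congr 1
      · exact Finset.sum_congr rfl fun j _ => by ring
      · ring
    have step2 : (∑ k ∈ Finset.Icc 1 N, ∑ j ∈ Finset.range N,
        (c k * (k : ℂ) ^ j) * ((Complex.I * t) ^ j / j.factorial)) = 1 := by
      rw [Finset.sum_comm]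
      have hterm : ∀ j ∈ Finset.range N,
          (∑ k ∈ Finset.Icc 1 N, (c k * (k : ℂ) ^ j) * ((Complex.I * t) ^ j / j.factorial))
            = (∑ k ∈ Finset.Icc 1 N, c k * (k : ℂ) ^ j) * ((Complex.I * t) ^ j / j.factorial) :=
        fun j _ => (Finset.sum_mul _ _ _).symm
      rw [Finset.sum_congr rfl hterm]
      rw [Finset.sum_eq_single 0]
      · simp [h0]
      · intro j hj hj0
        rw [h1 j (Nat.one_le_iff_ne_zero.mpr hj0)
          (Nat.le_sub_one_of_lt (Finset.mem_range.mp hj)), zero_mul]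
      · intro hmem
        exact absurd (Finset.mem_range.mpr hN) hmem
    rw [step1, step2, hhdef, Finset.mul_sum]
    ring
  -- representation of iterated derivatives
  have key : ∀ m : ℕ, ∃ (n : ℕ) (t : Fin n → ℝ) (φ : Fin n → ℝ → ℂ),
      (∀ i, α * N - m ≤ t i) ∧ (∀ i, ContDiff ℝ (⊤ : ℕ∞) (φ i)) ∧
      ∀ ξ : ℝ, 0 < ξ →
        iteratedDeriv m E ξ = ∑ i, ((ξ ^ t i : ℝ) : ℂ) * φ i (ξ ^ α) := by
    intro m
    induction m with
    | zero =>
      refine ⟨1, fun _ => α * N, fun _ => h, fun _ => by simp, fun _ => hsm, fun ξ hξ => ?_⟩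
      rw [iteratedDeriv_zero]
      have hcast : ((ξ ^ (α * (N : ℝ)) : ℝ) : ℂ) = ((ξ ^ α : ℝ) : ℂ) ^ N := by
        rw [Real.rpow_mul hξ.le, Real.rpow_natCast]
        push_cast
        ring
      simp only [Fin.sum_univ_one]
      rw [hEdef]
      simp only [Nat.cast_zero, sub_zero]
      rw [hfact (ξ ^ α), hcast]
    | succ m ih =>
      obtain ⟨n, t, φ, ht, hφ, hrep⟩ := ih
      refine ⟨n + n, Fin.append (fun i => t i - 1) (fun i => t i + (α - 1)),
        Fin.append (fun i s => (t i : ℂ) * φ i s) (fun i s => (α : ℂ) * deriv (φ i) s),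
        ?_, ?_, ?_⟩
      · intro i
        refine Fin.addCases (fun i => ?_) (fun i => ?_) i
        · rw [Fin.append_left]
          have := ht i
          push_cast
          push_cast at this
          linarith
        · rw [Fin.append_right]
          have := ht i
          push_cast
          push_cast at this
          linarith
      · intro i
        refine Fin.addCases (fun i => ?_) (fun i => ?_) i
        · rw [Fin.append_left]
          exact contDiff_const.mul (hφ i)
        · rw [Fin.append_right]
          exact contDiff_const.mul (contDiff_infty_iff_deriv.mp (hφ i)).2
      · intro ξ hξ
        rw [iteratedDeriv_succ]
        have hev : iteratedDeriv m E =ᶠ[nhds ξ]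
            (fun x : ℝ => ∑ i, ((x ^ t i : ℝ) : ℂ) * φ i (x ^ α)) :=
          Filter.eventuallyEq_of_mem (Ioi_mem_nhds hξ) fun x hx => hrep x hx
        rw [hev.deriv_eq]
        have hD : HasDerivAt (fun x : ℝ => ∑ i, ((x ^ t i : ℝ) : ℂ) * φ i (x ^ α))
            (∑ i, (((t i * ξ ^ (t i - 1) : ℝ) : ℂ) * φ i (ξ ^ α)
              + ((ξ ^ t i : ℝ) : ℂ) * ((α * ξ ^ (α - 1) : ℝ) • deriv (φ i) (ξ ^ α)))) ξ := by
          apply HasDerivAt.fun_sum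
          intro i _
          have hA : HasDerivAt (fun x : ℝ => ((x ^ t i : ℝ) : ℂ))
              ((t i * ξ ^ (t i - 1) : ℝ)) ξ :=
            (Real.hasDerivAt_rpow_const (Or.inl hξ.ne')).ofReal_comp
          have hB : HasDerivAt (fun x : ℝ => φ i (x ^ α))
              ((α * ξ ^ (α - 1) : ℝ) • deriv (φ i) (ξ ^ α)) ξ := by
            have hd : HasDerivAt (φ i) (deriv (φ i) (ξ ^ α)) (ξ ^ α) :=
              ((hφ i).differentiable (by simp) (ξ ^ α)).hasDerivAt
            exact hd.scomp ξ (Real.hasDerivAt_rpow_const (Or.inl hξ.ne'))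
          exact hA.mul hB
        rw [hD.deriv, Fin.sum_univ_add]
        simp only [Fin.append_left, Fin.append_right]
        rw [Finset.sum_add_distrib]
        congr 1
        · refine Finset.sum_congr rfl fun i _ => ?_
          push_cast
          ring
        · refine Finset.sum_congr rfl fun i _ => ?_
          have hsplit : ξ ^ (t i + (α - 1)) = ξ ^ t i * ξ ^ (α - 1) := Real.rpow_add hξ _ _
          rw [hsplit, Complex.real_smul]
          push_cast
          ring
  constructor
  · -- smoothness
    intro x hx
    apply ContDiffAt.contDiffWithinAt
    apply ContDiffAt.sub _ contDiffAt_const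
    apply ContDiffAt.sum
    intro k _
    have hr : ContDiffAt ℝ (⊤ : ℕ∞) (fun ξ : ℝ => ((ξ ^ α : ℝ) : ℂ)) x :=
      Complex.ofRealCLM.contDiff.contDiffAt.comp x
        (Real.contDiffAt_rpow_const_of_ne (ne_of_gt hx))
    have houter : ContDiff ℝ (⊤ : ℕ∞) (fun z : ℂ => c k * Complex.exp (Complex.I * (k : ℂ) * z)) := by
      have : Differentiable ℂ (fun z : ℂ => c k * Complex.exp (Complex.I * (k : ℂ) * z)) :=
        ((Complex.differentiable_exp.comp (differentiable_id.const_mul _)).const_mul _)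
      exact this.contDiff.restrict_scalars ℝ
    exact houter.contDiffAt.comp x hr
  · -- bounds
    intro m
    obtain ⟨n, t, φ, ht, hφ, hrep⟩ := key m
    have hMex : ∀ i, ∃ M : ℝ, ∀ s ∈ Set.Icc (0 : ℝ) (2 ^ α), ‖φ i s‖ ≤ M := fun i =>
      isCompact_Icc.exists_bound_of_continuousOn ((hφ i).continuous.continuousOn)
    choose M hM using hMex
    set b : ℝ := α * N - m with hb
    refine ⟨(∑ i, max (M i) 0 * 2 ^ (t i - b)) + 1, by positivity, ?_⟩
    intro ξ hξ hξ2
    rw [hrep ξ hξ]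
    have hbnn : (0 : ℝ) ≤ ξ ^ b := Real.rpow_nonneg hξ.le _
    calc ‖∑ i, ((ξ ^ t i : ℝ) : ℂ) * φ i (ξ ^ α)‖
        ≤ ∑ i, ‖((ξ ^ t i : ℝ) : ℂ) * φ i (ξ ^ α)‖ := norm_sum_le _ _
      _ ≤ ∑ i, max (M i) 0 * 2 ^ (t i - b) * ξ ^ b := by
          apply Finset.sum_le_sum
          intro i _
          rw [norm_mul, Complex.norm_real, Real.norm_eq_abs,
            _root_.abs_of_nonneg (Real.rpow_nonneg hξ.le _)]
          have hφb : ‖φ i (ξ ^ α)‖ ≤ max (M i) 0 :=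
            le_max_of_le_left (hM i _ ⟨Real.rpow_nonneg hξ.le _,
              Real.rpow_le_rpow hξ.le hξ2 hα0.le⟩)
          have hξt : ξ ^ t i ≤ 2 ^ (t i - b) * ξ ^ b := by
            have e : ξ ^ t i = ξ ^ (t i - b) * ξ ^ b := by
              rw [← Real.rpow_add hξ]
              ring_nf
            rw [e]
            have : ξ ^ (t i - b) ≤ 2 ^ (t i - b) :=
              Real.rpow_le_rpow hξ.le hξ2 (sub_nonneg.mpr (ht i))
            exact mul_le_mul_of_nonneg_right this hbnn
          calc ξ ^ t i * ‖φ i (ξ ^ α)‖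
              ≤ (2 ^ (t i - b) * ξ ^ b) * max (M i) 0 :=
                mul_le_mul hξt hφb (norm_nonneg _) (by positivity)
            _ = max (M i) 0 * 2 ^ (t i - b) * ξ ^ b := by ring
      _ = (∑ i, max (M i) 0 * 2 ^ (t i - b)) * ξ ^ b := (Finset.sum_mul _ _ _).symm
      _ ≤ ((∑ i, max (M i) 0 * 2 ^ (t i - b)) + 1) * ξ ^ b := by
          apply mul_le_mul_of_nonneg_right _ hbnn
          linarith
end
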